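/- arXiv:1308.0888 — 6 statements merged into one kernel-verified Lean document; each statement's English description precedes it below -/
import Mathlib

section
/- Let δ > 0 and Q > 0. Let X be a geodesic metric space with δ-thin triangles, let Y ⊆ X be a nonempty Q-quasi-convex subset, and let π : X → Y be a nearest-point retraction, i.e. dist(z, π(z)) = infDist(z, Y) for every z ∈ X. Set A = 2Q + 3δ + 1. Then for every B > 0, setting C = B + Q + 2δ + 1, the following holds: for all z, w ∈ X with dist(z, w) ≤ B, infDist(z, Y) ≥ C, and infDist(w, Y) ≥ C, one has dist(π(z), π(w)) ≤ A. -/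
open Metric Set

/-- `σ` is a geodesic from `a` to `b`: defined on `[0, dist a b]`, starting at `a`,
ending at `b`, and an isometry on that interval. -/
def IsGeodesicFrom {X : Type*} [MetricSpace X] (σ : ℝ → X) (a b : X) : Prop :=
  σ 0 = a ∧ σ (dist a b) = b ∧
    ∀ s ∈ Set.Icc (0 : ℝ) (dist a b), ∀ t ∈ Set.Icc (0 : ℝ) (dist a b),
      dist (σ s) (σ t) = |s - t|

/-- `X` is a geodesic space: every pair of points is joined by a geodesic. -/
def GeodesicSpace (X : Type*) [MetricSpace X] : Prop :=
  ∀ a b : X, ∃ σ : ℝ → X, IsGeodesicFrom σ a b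

/-- Gromov product `(P|R)_Q` (base point is the first argument). -/
noncomputable def gromovProd {X : Type*} [MetricSpace X] (Q P R : X) : ℝ :=
  (dist P Q + dist R Q - dist P R) / 2

/-- `X` has `δ`-thin triangles. -/
def ThinTriangles (X : Type*) [MetricSpace X] (δ : ℝ) : Prop :=
  ∀ P Q R : X, ∀ σ₁ σ₂ : ℝ → X, IsGeodesicFrom σ₁ Q P → IsGeodesicFrom σ₂ Q R →
    ∀ t ∈ Set.Icc (0 : ℝ) (gromovProd Q P R), dist (σ₁ t) (σ₂ t) ≤ δ

/-- `Y` is a `K`-quasi-convex subset of `X`. -/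
def QuasiConvex {X : Type*} [MetricSpace X] (Y : Set X) (K : ℝ) : Prop :=
  ∀ y₁ ∈ Y, ∀ y₂ ∈ Y, ∀ σ : ℝ → X, IsGeodesicFrom σ y₁ y₂ →
    ∀ t ∈ Set.Icc (0 : ℝ) (dist y₁ y₂), infDist (σ t) Y ≤ K

lemma gp_nonneg {X : Type*} [MetricSpace X] (Q P R : X) : 0 ≤ gromovProd Q P R := by
  have h := dist_triangle P Q R
  have h2 : dist Q R = dist R Q := dist_comm _ _
  unfold gromovProd
  linarith

lemma gp_le_left {X : Type*} [MetricSpace X] (Q P R : X) : gromovProd Q P R ≤ dist P Q := by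
  have h := dist_triangle R P Q
  have h3 : dist R P = dist P R := dist_comm _ _
  unfold gromovProd
  linarith

lemma gp_le_right {X : Type*} [MetricSpace X] (Q P R : X) : gromovProd Q P R ≤ dist R Q := by
  have h := dist_triangle P R Q
  unfold gromovProd
  linarith

/-- Lemma (`qc`): if `Y` is `Q`-quasi-convex and `π` is a nearest-point retraction onto `Y`,
then with `A = 2Q + 3δ + 1` and, for any `B > 0`, `C = B + Q + 2δ + 1`, any two points
that are `B`-close and at distance at least `C` from `Y` have `A`-close projections. -/
theorem stmt_0 (δ Q : ℝ) (hδ : 0 < δ) (hQ : 0 < Q)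
    (X : Type*) [MetricSpace X]
    (hgeo : GeodesicSpace X) (hthin : ThinTriangles X δ)
    (Y : Set X) (hYne : Y.Nonempty) (hqc : QuasiConvex Y Q)
    (π : X → X) (hπY : ∀ z : X, π z ∈ Y)
    (hπ : ∀ z : X, dist z (π z) = infDist z Y)
    (B : ℝ) (hB : 0 < B) :
    ∀ z w : X, dist z w ≤ B →
      B + Q + 2 * δ + 1 ≤ infDist z Y →
      B + Q + 2 * δ + 1 ≤ infDist w Y →
      dist (π z) (π w) ≤ 2 * Q + 3 * δ + 1 := by
  intro z w hzw hz hw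
  obtain ⟨ρ, hρ⟩ := hgeo (π z) z
  obtain ⟨τ, hτ⟩ := hgeo (π z) (π w)
  obtain ⟨α, hα⟩ := hgeo (π w) z
  obtain ⟨τ', hτ'⟩ := hgeo (π w) (π z)
  obtain ⟨β, hβ⟩ := hgeo (π w) w
  have hπzY := hπY z
  have hπwY := hπY w
  have hcz : dist (π z) z = dist z (π z) := dist_comm _ _
  have hcw : dist (π w) w = dist w (π w) := dist_comm _ _
  have hczw : dist (π w) (π z) = dist (π z) (π w) := dist_comm _ _
  have hcb : dist (π w) z = dist z (π w) := dist_comm _ _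
  -- Step 1 : t0 := (z | πw)_{πz} ≤ Q + δ
  set t0 := gromovProd (π z) z (π w) with ht0def
  have ht0 : t0 = (dist z (π z) + dist (π w) (π z) - dist z (π w)) / 2 := rfl
  have ht0nn : 0 ≤ t0 := gp_nonneg _ _ _
  have ht0a : t0 ≤ dist z (π z) := gp_le_left _ _ _
  have ht0D : t0 ≤ dist (π w) (π z) := gp_le_right _ _ _
  have hthin1 : dist (ρ t0) (τ t0) ≤ δ :=
    hthin z (π z) (π w) ρ τ hρ hτ t0 ⟨ht0nn, le_rfl⟩
  have hρz : dist (ρ t0) z = dist z (π z) - t0 := by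
    have h := hρ.2.2 t0 ⟨ht0nn, by linarith⟩ (dist (π z) z) ⟨dist_nonneg, le_rfl⟩
    rw [hρ.2.1] at h
    rw [h, abs_of_nonpos (by linarith)]
    linarith
  have hqc1 : infDist (τ t0) Y ≤ Q :=
    hqc (π z) hπzY (π w) hπwY τ hτ t0 ⟨ht0nn, by linarith⟩
  have hstep1 : t0 ≤ Q + δ := by
    have h1 : infDist z Y ≤ infDist (τ t0) Y + dist z (τ t0) :=
      infDist_le_infDist_add_dist
    have h2 : dist z (τ t0) ≤ dist z (ρ t0) + dist (ρ t0) (τ t0) := dist_triangle _ _ _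
    have h3 : dist z (ρ t0) = dist (ρ t0) z := dist_comm _ _
    have h4 := hπ z
    linarith
  -- Step 2 : u1 := (z | πz)_{πw} ≤ Q + 2δ
  set u1 := gromovProd (π w) z (π z) with hu1def
  have hu1 : u1 = (dist z (π w) + dist (π z) (π w) - dist z (π z)) / 2 := rfl
  set p := gromovProd (π w) z w with hpdef
  have hp : p = (dist z (π w) + dist w (π w) - dist z w) / 2 := rfl
  have hu1nn : 0 ≤ u1 := gp_nonneg _ _ _
  have hpnn : 0 ≤ p := gp_nonneg _ _ _
  have hu1D : u1 ≤ dist (π z) (π w) := gp_le_right _ _ _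
  have hpw : p ≤ dist w (π w) := gp_le_right _ _ _
  -- p is large
  have hzd : infDist z Y ≤ dist z (π w) := infDist_le_dist_of_mem hπwY
  have hwd := hπ w
  have hplarge : Q + 2 * δ < p := by rw [hp]; linarith
  set u := min u1 p with hudef
  have hunn : 0 ≤ u := le_min hu1nn hpnn
  have huu1 : u ≤ u1 := min_le_left _ _
  have hup : u ≤ p := min_le_right _ _
  have hthin2 : dist (α u) (τ' u) ≤ δ :=
    hthin z (π w) (π z) α τ' hα hτ' u ⟨hunn, huu1⟩
  have hthin3 : dist (α u) (β u) ≤ δ :=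
    hthin z (π w) w α β hα hβ u ⟨hunn, hup⟩
  have hqc2 : infDist (τ' u) Y ≤ Q :=
    hqc (π w) hπwY (π z) hπzY τ' hτ' u ⟨hunn, by linarith⟩
  have hβw : dist (β u) w = dist w (π w) - u := by
    have h := hβ.2.2 u ⟨hunn, by linarith⟩ (dist (π w) w) ⟨dist_nonneg, le_rfl⟩
    rw [hβ.2.1] at h
    rw [h, abs_of_nonpos (by linarith)]
    linarith
  have humax : u ≤ Q + 2 * δ := by
    have h1 : infDist w Y ≤ infDist (τ' u) Y + dist w (τ' u) :=
      infDist_le_infDist_add_dist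
    have h2 : dist w (τ' u) ≤ dist w (β u) + dist (β u) (α u) + dist (α u) (τ' u) :=
      dist_triangle4 _ _ _ _
    have h3 : dist w (β u) = dist (β u) w := dist_comm _ _
    have h4 : dist (β u) (α u) = dist (α u) (β u) := dist_comm _ _
    linarith
  have hstep2 : u1 ≤ Q + 2 * δ := by
    rcases le_total u1 p with h | h
    · rwa [hudef, min_eq_left h] at humax
    · rw [hudef, min_eq_right h] at humax; linarith
  -- Conclusion : dist (πz) (πw) = t0 + u1
  have hsum : dist (π z) (π w) = t0 + u1 := by rw [ht0, hu1]; linarith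
  linarith
end

section
/- Let δ > 0 and L > 0. Let X be a geodesic metric space with δ-thin triangles and let Y ⊆ X be a nonempty subset. Let x, y, z ∈ X, let c be a geodesic from z to x such that infDist(c(t), Y) = dist(c(t), x) for every t ∈ [0, dist(z, x)], and let d be a geodesic from x to y such that infDist(d(t), Y) ≤ L for every t ∈ [0, dist(x, y)]. Then the Gromov product satisfies (z|y)_x ≤ L + δ. -/
open Metric Set

/-- Lemma (`geodesic in Delta`): if every point of the geodesic `c` from `z` to `x` has its
nearest point of `Y` at the endpoint `x`, and the geodesic `d` from `x` to `y` stays in the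
`L`-neighbourhood of `Y`, then the Gromov product `(z|y)_x` is at most `L + δ`. -/
theorem stmt_1 (δ L : ℝ) (hδ : 0 < δ) (hL : 0 < L)
    (X : Type*) [MetricSpace X]
    (hgeo : GeodesicSpace X) (hthin : ThinTriangles X δ)
    (Y : Set X) (hYne : Y.Nonempty)
    (x y z : X) (c d : ℝ → X)
    (hc : IsGeodesicFrom c z x)
    (hcY : ∀ t ∈ Set.Icc (0 : ℝ) (dist z x), infDist (c t) Y = dist (c t) x)
    (hd : IsGeodesicFrom d x y)
    (hdY : ∀ t ∈ Set.Icc (0 : ℝ) (dist x y), infDist (d t) Y ≤ L) :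
    gromovProd x z y ≤ L + δ := by
  set a := dist z x with ha
  set g := gromovProd x z y with hgdef
  have hgval : g = (dist z x + dist y x - dist z y) / 2 := rfl
  have ha0 : (0:ℝ) ≤ a := dist_nonneg
  have hg0 : 0 ≤ g := by
    have := dist_triangle z x y
    rw [hgval]
    have h1 : dist y x = dist x y := dist_comm y x
    linarith
  have hga : g ≤ a := by
    have := dist_triangle y z x
    rw [hgval, ha]
    have h1 : dist y x = dist x y := dist_comm y x
    have h2 : dist y z = dist z y := dist_comm y z
    linarith
  have hgb : g ≤ dist x y := by
    have := dist_triangle z y x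
    rw [hgval]
    have h1 : dist y x = dist x y := dist_comm y x
    have h2 : dist y x = dist x y := dist_comm y x
    linarith
  have haxz : dist x z = a := dist_comm x z
  -- reversed geodesic from x to z
  set c' : ℝ → X := fun t => c (a - t) with hc'def
  have hc' : IsGeodesicFrom c' x z := by
    refine ⟨?_, ?_, ?_⟩
    · simp only [hc'def, sub_zero]
      exact hc.2.1
    · simp only [hc'def, haxz, sub_self]
      exact hc.1
    · intro s hs t ht
      rw [haxz] at hs ht
      have h1 : a - s ∈ Set.Icc (0:ℝ) a := ⟨by linarith [hs.2], by linarith [hs.1]⟩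
      have h2 : a - t ∈ Set.Icc (0:ℝ) a := ⟨by linarith [ht.2], by linarith [ht.1]⟩
      have := hc.2.2 (a - s) h1 (a - t) h2
      simp only [hc'def]
      rw [this]
      rw [abs_sub_comm]
      congr 1
      ring
  have hthin' := hthin z x y c' d hc' hd g ⟨hg0, le_refl g⟩
  -- infDist (c' g) Y = g
  have hag : a - g ∈ Set.Icc (0:ℝ) a := ⟨by linarith, by linarith⟩
  have hdc : dist (c (a - g)) x = g := by
    have hx : c a = x := hc.2.1
    have := hc.2.2 (a - g) hag a ⟨ha0, le_refl a⟩
    rw [hx] at this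
    rw [this]
    rw [abs_of_nonpos (by linarith)]
    ring
  have hinf : infDist (c' g) Y = g := by
    rw [hc'def]
    simpa [hdc] using hcY (a - g) hag
  have hle : infDist (c' g) Y ≤ infDist (d g) Y + dist (c' g) (d g) :=
    infDist_le_infDist_add_dist
  have hdg := hdY g ⟨hg0, hgb⟩
  rw [hinf] at hle
  linarith
end

section
/- Let δ > 0, L₁ > 0, L₂ > 0. Let X be a metric space and let z, x, y, w ∈ X. Let c, d, f, e, h be geodesics from z to x, from x to y, from y to w, from z to y, and from z to w, respectively. Assume: (i) for every point p in the image of c or of d with dist(p, x) > L₁, one has infDist(p, e([0, dist(z,y)])) ≤ δ; and (ii) for every point p in the image of e or of f with dist(p, y) > L₂, one has infDist(p, h([0, dist(z,w)])) ≤ δ. Set T₁ = dist(z,x), T₂ = dist(x,y), T₃ = dist(y,w), and define the concatenation α : [0, T₁ + T₂ + T₃] → X by α(t) = c(t) for 0 ≤ t ≤ T₁, α(t) = d(t − T₁) for T₁ ≤ t ≤ T₁ + T₂, and α(t) = f(t − T₁ − T₂) for T₁ + T₂ ≤ t ≤ T₁ + T₂ + T₃. Then α is a (1, 2L₁ + 2L₂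 + 4δ)-quasi-geodesic: for all s, t in the domain, |s − t| − (2L₁ + 2L₂ + 4δ) ≤ dist(α(s), α(t)) ≤ |s − t|. -/
open Metric Set

private lemma geo_left {X : Type*} [MetricSpace X] {σ : ℝ → X} {a b : X}
    (hσ : IsGeodesicFrom σ a b) {u : ℝ} (hu : u ∈ Set.Icc (0:ℝ) (dist a b)) :
    dist a (σ u) = u := by
  have h0 : (0:ℝ) ∈ Set.Icc (0:ℝ) (dist a b) := ⟨le_refl _, dist_nonneg⟩
  have h := hσ.2.2 0 h0 u hu
  rw [hσ.1] at h
  rw [h, abs_of_nonpos (by linarith [hu.1] : (0:ℝ) - u ≤ 0)]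
  ring

private lemma geo_right {X : Type*} [MetricSpace X] {σ : ℝ → X} {a b : X}
    (hσ : IsGeodesicFrom σ a b) {u : ℝ} (hu : u ∈ Set.Icc (0:ℝ) (dist a b)) :
    dist (σ u) b = dist a b - u := by
  have hT : dist a b ∈ Set.Icc (0:ℝ) (dist a b) := ⟨dist_nonneg, le_refl _⟩
  have h := hσ.2.2 u hu (dist a b) hT
  rw [hσ.2.1] at h
  rw [h, abs_of_nonpos (by linarith [hu.2] : u - dist a b ≤ 0)]
  ring

private lemma geo_key {X : Type*} [MetricSpace X] (δ L : ℝ) (hδ : 0 < δ) (hL : 0 < L)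
    (z x y : X) (c e : ℝ → X)
    (hc : IsGeodesicFrom c z x) (he : IsGeodesicFrom e z y)
    (hyp : ∀ p ∈ c '' Set.Icc (0:ℝ) (dist z x), dist p x > L →
      infDist p (e '' Set.Icc (0:ℝ) (dist z y)) ≤ δ) :
    dist z x + dist x y - 2*L - 2*δ ≤ dist z y := by
  have hne : (e '' Set.Icc (0:ℝ) (dist z y)).Nonempty :=
    ⟨e 0, ⟨0, ⟨le_refl _, dist_nonneg⟩, rfl⟩⟩
  have step : ∀ s ∈ Set.Icc (0:ℝ) (dist z x), L < dist z x - s →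
      dist (c s) y ≤ dist z y - s + 2*δ := by
    intro s hs hgt
    have hinf := hyp (c s) ⟨s, hs, rfl⟩ (by rw [geo_right hc hs]; exact hgt)
    have hle : (dist (c s) y - dist z y + s) / 2 ≤
        infDist (c s) (e '' Set.Icc (0:ℝ) (dist z y)) := by
      by_contra hcon
      push_neg at hcon
      obtain ⟨q, ⟨u, hu, rfl⟩, hlt⟩ := (Metric.infDist_lt_iff hne).mp hcon
      refine absurd hlt (not_lt.mpr ?_)
      have e1 : dist (e u) y = dist z y - u := geo_right he hu
      have e2 : dist z (e u) = u := geo_left he hu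
      have s1 : dist z (c s) = s := geo_left hc hs
      have t1 : dist (c s) y ≤ dist (c s) (e u) + dist (e u) y := dist_triangle _ _ _
      have t2 : dist z (c s) ≤ dist z (e u) + dist (e u) (c s) := dist_triangle _ _ _
      rw [dist_comm (e u) (c s)] at t2
      linarith
    linarith [hle.trans hinf]
  refine le_of_forall_pos_le_add fun ε hε => ?_
  by_cases hT : dist z x ≤ L + ε/2
  · have h1 : dist x y ≤ dist x z + dist z y := dist_triangle _ _ _
    rw [dist_comm x z] at h1
    linarith
  · push_neg at hT
    have hs : dist z x - L - ε/2 ∈ Set.Icc (0:ℝ) (dist z x) :=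
      ⟨by linarith, by linarith⟩
    have hgt : L < dist z x - (dist z x - L - ε/2) := by linarith
    have h1 := step _ hs hgt
    have h2 : dist x y ≤ dist x (c (dist z x - L - ε/2)) + dist (c (dist z x - L - ε/2)) y :=
      dist_triangle _ _ _
    have h3 : dist (c (dist z x - L - ε/2)) x = dist z x - (dist z x - L - ε/2) :=
      geo_right hc hs
    rw [dist_comm x (c (dist z x - L - ε/2)), h3] at h2
    linarith

private lemma main_core (δ L₁ L₂ : ℝ) (hδ : 0 < δ) (hL₁ : 0 < L₁) (hL₂ : 0 < L₂)
    {X : Type*} [MetricSpace X] (z x y w : X) (c d f : ℝ → X)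
    (hc : IsGeodesicFrom c z x) (hd : IsGeodesicFrom d x y)
    (hf : IsGeodesicFrom f y w)
    (keyA : dist z x + dist x y - 2*L₁ - 2*δ ≤ dist z y)
    (keyB : dist z y + dist y w - 2*L₂ - 2*δ ≤ dist z w)
    (α : ℝ → X)
    (hα : ∀ u, α u = if u ≤ dist z x then c u else
      if u ≤ dist z x + dist x y then d (u - dist z x) else f (u - dist z x - dist x y))
    {s t : ℝ} (hs : s ∈ Set.Icc (0:ℝ) (dist z x + dist x y + dist y w))
    (ht : t ∈ Set.Icc (0:ℝ) (dist z x + dist x y + dist y w)) (hst : s ≤ t) :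
    t - s - (2 * L₁ + 2 * L₂ + 4 * δ) ≤ dist (α s) (α t) ∧ dist (α s) (α t) ≤ t - s := by
  set T₁ := dist z x with hT1
  set T₂ := dist x y with hT2
  set T₃ := dist y w with hT3
  have h0T1 : 0 ≤ T₁ := dist_nonneg
  have h0T2 : 0 ≤ T₂ := dist_nonneg
  have h0T3 : 0 ≤ T₃ := dist_nonneg
  have hzs : dist z (α s) ≤ s := by
    rw [hα]
    by_cases h1 : s ≤ T₁
    · rw [if_pos h1, geo_left hc ⟨hs.1, h1⟩]
    · rw [if_neg h1]
      push_neg at h1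
      by_cases h2 : s ≤ T₁ + T₂
      · rw [if_pos h2]
        have hdl := geo_left hd (u := s - T₁) ⟨by linarith, by linarith⟩
        calc dist z (d (s - T₁)) ≤ dist z x + dist x (d (s - T₁)) := dist_triangle _ _ _
          _ = T₁ + (s - T₁) := by rw [hdl]
          _ = s := by ring
      · rw [if_neg h2]
        push_neg at h2
        have hfu := geo_left hf (u := s - T₁ - T₂) ⟨by linarith, by linarith [hs.2]⟩
        have hzy : dist z y ≤ dist z x + dist x y := dist_triangle _ _ _
        calc dist z (f (s - T₁ - T₂)) ≤ dist z y + dist y (f (s - T₁ - T₂)) :=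
              dist_triangle _ _ _
          _ ≤ (T₁ + T₂) + (s - T₁ - T₂) := by rw [hfu]; linarith
          _ = s := by ring
  constructor
  · -- lower bound
    rcases le_or_gt t (T₁ + T₂) with ht2 | ht2
    · have hyt : dist (α t) y ≤ T₁ + T₂ - t := by
        rw [hα]
        by_cases h1 : t ≤ T₁
        · rw [if_pos h1]
          calc dist (c t) y ≤ dist (c t) x + dist x y := dist_triangle _ _ _
            _ = (T₁ - t) + T₂ := by rw [geo_right hc ⟨ht.1, h1⟩]
            _ = T₁ + T₂ - t := by ring
        · push_neg at h1
          rw [if_neg (not_le.mpr h1), if_pos ht2]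
          have hdr := geo_right hd (u := t - T₁) ⟨by linarith, by linarith⟩
          rw [hdr]; linarith
      have tri1 : dist z y ≤ dist z (α t) + dist (α t) y := dist_triangle _ _ _
      have tri2 : dist z (α t) ≤ dist z (α s) + dist (α s) (α t) := dist_triangle _ _ _
      linarith
    · have hwt : dist (α t) w ≤ T₁ + T₂ + T₃ - t := by
        rw [hα, if_neg (by push_neg; linarith : ¬ t ≤ T₁), if_neg (not_le.mpr ht2)]
        have hfr := geo_right hf (u := t - T₁ - T₂) ⟨by linarith, by linarith [ht.2]⟩
        rw [hfr]; linarith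
      have tri1 : dist z w ≤ dist z (α t) + dist (α t) w := dist_triangle _ _ _
      have tri2 : dist z (α t) ≤ dist z (α s) + dist (α s) (α t) := dist_triangle _ _ _
      linarith
  · -- upper bound
    rw [hα s, hα t]
    by_cases hs1 : s ≤ T₁
    · rw [if_pos hs1]
      by_cases ht1 : t ≤ T₁
      · rw [if_pos ht1, hc.2.2 s ⟨hs.1, hs1⟩ t ⟨ht.1, ht1⟩,
          abs_of_nonpos (by linarith : s - t ≤ 0)]
        linarith
      · push_neg at ht1
        rw [if_neg (not_le.mpr ht1)]
        have hcr : dist (c s) x = T₁ - s := geo_right hc ⟨hs.1, hs1⟩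
        by_cases ht2 : t ≤ T₁ + T₂
        · rw [if_pos ht2]
          have hdl := geo_left hd (u := t - T₁) ⟨by linarith, by linarith⟩
          calc dist (c s) (d (t - T₁)) ≤ dist (c s) x + dist x (d (t - T₁)) :=
                dist_triangle _ _ _
            _ = (T₁ - s) + (t - T₁) := by rw [hcr, hdl]
            _ = t - s := by ring
        · push_neg at ht2
          rw [if_neg (not_le.mpr ht2)]
          have hfl := geo_left hf (u := t - T₁ - T₂) ⟨by linarith, by linarith [ht.2]⟩
          calc dist (c s) (f (t - T₁ - T₂))
              ≤ dist (c s) x + dist x y + dist y (f (t - T₁ - T₂)) :=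
                dist_triangle4 _ _ _ _
            _ = (T₁ - s) + T₂ + (t - T₁ - T₂) := by rw [hcr, hfl]
            _ = t - s := by ring
    · push_neg at hs1
      rw [if_neg (not_le.mpr hs1)]
      by_cases hs2 : s ≤ T₁ + T₂
      · rw [if_pos hs2]
        rw [if_neg (by push_neg; linarith : ¬ t ≤ T₁)]
        by_cases ht2 : t ≤ T₁ + T₂
        · rw [if_pos ht2]
          rw [hd.2.2 (s - T₁) ⟨by linarith, by linarith⟩ (t - T₁) ⟨by linarith, by linarith⟩,
            abs_of_nonpos (by linarith : s - T₁ - (t - T₁) ≤ 0)]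
          linarith
        · push_neg at ht2
          rw [if_neg (not_le.mpr ht2)]
          have hdr : dist (d (s - T₁)) y = T₂ - (s - T₁) :=
            geo_right hd ⟨by linarith, by linarith⟩
          have hfl := geo_left hf (u := t - T₁ - T₂) ⟨by linarith, by linarith [ht.2]⟩
          calc dist (d (s - T₁)) (f (t - T₁ - T₂))
              ≤ dist (d (s - T₁)) y + dist y (f (t - T₁ - T₂)) := dist_triangle _ _ _
            _ = (T₂ - (s - T₁)) + (t - T₁ - T₂) := by rw [hdr, hfl]
            _ = t - s := by ring
      · push_neg at hs2
        rw [if_neg (not_le.mpr hs2),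
          if_neg (by push_neg; linarith : ¬ t ≤ T₁), if_neg (by push_neg; linarith : ¬ t ≤ T₁ + T₂)]
        rw [hf.2.2 (s - T₁ - T₂) ⟨by linarith, by linarith [hs.2]⟩
            (t - T₁ - T₂) ⟨by linarith, by linarith [ht.2]⟩,
          abs_of_nonpos (by linarith : s - T₁ - T₂ - (t - T₁ - T₂) ≤ 0)]
        linarith

/-- Key step of the Proposition (`quasi-geodesic`): if points of `c ∪ d` far from the corner `x`
are `δ`-close to `e`, and points of `e ∪ f` far from the corner `y` are `δ`-close to `h`, then
the concatenation `c ∪ d ∪ f` is a `(1, 2L₁ + 2L₂ + 4δ)`-quasi-geodesic. -/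
theorem stmt_2 (δ L₁ L₂ : ℝ) (hδ : 0 < δ) (hL₁ : 0 < L₁) (hL₂ : 0 < L₂)
    (X : Type*) [MetricSpace X] (z x y w : X)
    (c d f e h : ℝ → X)
    (hc : IsGeodesicFrom c z x) (hd : IsGeodesicFrom d x y)
    (hf : IsGeodesicFrom f y w) (he : IsGeodesicFrom e z y)
    (hh : IsGeodesicFrom h z w)
    (hyp1 : ∀ p ∈ c '' Set.Icc (0 : ℝ) (dist z x) ∪ d '' Set.Icc (0 : ℝ) (dist x y),
      dist p x > L₁ → infDist p (e '' Set.Icc (0 : ℝ) (dist z y)) ≤ δ)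
    (hyp2 : ∀ p ∈ e '' Set.Icc (0 : ℝ) (dist z y) ∪ f '' Set.Icc (0 : ℝ) (dist y w),
      dist p y > L₂ → infDist p (h '' Set.Icc (0 : ℝ) (dist z w)) ≤ δ) :
    let T₁ := dist z x
    let T₂ := dist x y
    let T₃ := dist y w
    let α : ℝ → X := fun t =>
      if t ≤ T₁ then c t else if t ≤ T₁ + T₂ then d (t - T₁) else f (t - T₁ - T₂)
    ∀ s ∈ Set.Icc (0 : ℝ) (T₁ + T₂ + T₃), ∀ t ∈ Set.Icc (0 : ℝ) (T₁ + T₂ + T₃),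
      |s - t| - (2 * L₁ + 2 * L₂ + 4 * δ) ≤ dist (α s) (α t) ∧
        dist (α s) (α t) ≤ |s - t| := by
  intro T₁ T₂ T₃ α s hs t ht
  have keyA : dist z x + dist x y - 2*L₁ - 2*δ ≤ dist z y :=
    geo_key δ L₁ hδ hL₁ z x y c e hc he (fun p hp => hyp1 p (Or.inl hp))
  have keyB : dist z y + dist y w - 2*L₂ - 2*δ ≤ dist z w :=
    geo_key δ L₂ hδ hL₂ z y w e h he hh (fun p hp => hyp2 p (Or.inl hp))
  rcases le_total s t with hst | hst
  · have H := main_core δ L₁ L₂ hδ hL₁ hL₂ z x y w c d f hc hd hf keyA keyB α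
      (fun u => rfl) hs ht hst
    rw [abs_of_nonpos (by linarith : s - t ≤ 0)]
    constructor
    · linarith [H.1]
    · linarith [H.2]
  · have H := main_core δ L₁ L₂ hδ hL₁ hL₂ z x y w c d f hc hd hf keyA keyB α
      (fun u => rfl) ht hs hst
    rw [abs_of_nonneg (by linarith : 0 ≤ s - t), dist_comm (α s) (α t)]
    constructor
    · linarith [H.1]
    · linarith [H.2]
end

section
/- Let δ > 0 and L > 0. Let X be a geodesic metric space with δ-thin triangles, let G be a group acting on X by isometries (dist(g·p, g·q) = dist(p, q) for all g ∈ G and p, q ∈ X), and let Δ ⊆ X be a nonempty L-quasi-convex subset with g·Δ = Δ for every g ∈ G. Assume: (i) every non-identity element of G has infinite order; (ii) the action is acylindrical in the sense of Bowditch: for every D > 0 there exist R > 0 and N ∈ ℕ such that for all x, y ∈ X with dist(x, y) ≥ R, the set {g ∈ G : dist(x, g·x) ≤ D and dist(y, g·y) ≤ D} is finite with at most N elements; (iii) for every r ≥ L and every p ∈ X, there exists a point q in the closed neighbourhood N_r(Δ) = {u ∈ X : infDist(u, Δ) ≤ r} with dist(p, q) = infDist(p, N_r(Δ)). Then for every E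 > 0 there exists L₀ > 0 with the following property: for every geodesic γ : [0, T] → X with γ(T) ∈ Δ and infDist(γ(t), Δ) = dist(γ(t), γ(T)) for all t ∈ [0, T], every g ∈ G, and all 0 ≤ t₁ ≤ t₂ ≤ T with t₂ − t₁ ≥ L₀, if dist(γ(t), g·γ(t)) ≤ E for every t ∈ [t₁, t₂], then g is the identity. -/
open Metric Set

section Aux

variable {X : Type*} [MetricSpace X]

/-- Restriction/shift of a unit-speed parameterized segment is a geodesic. -/
lemma sub_geodesic {σ : ℝ → X} {T a b : ℝ}
    (hσ : ∀ s ∈ Set.Icc (0:ℝ) T, ∀ t ∈ Set.Icc (0:ℝ) T, dist (σ s) (σ t) = |s - t|)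
    (ha : 0 ≤ a) (hab : a ≤ b) (hb : b ≤ T) :
    dist (σ a) (σ b) = b - a ∧ IsGeodesicFrom (fun u => σ (a + u)) (σ a) (σ b) := by
  have haT : a ∈ Set.Icc (0:ℝ) T := ⟨ha, hab.trans hb⟩
  have hbT : b ∈ Set.Icc (0:ℝ) T := ⟨ha.trans hab, hb⟩
  have hd : dist (σ a) (σ b) = b - a := by
    rw [hσ a haT b hbT, abs_of_nonpos (by linarith)]; ring
  refine ⟨hd, by simp, ?_, ?_⟩
  · rw [hd]
    show σ (a + (b - a)) = σ b
    norm_num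
  · intro s hs t ht
    rw [hd] at hs ht
    have h1 : a + s ∈ Set.Icc (0:ℝ) T := ⟨by linarith [hs.1], by linarith [hs.2]⟩
    have h2 : a + t ∈ Set.Icc (0:ℝ) T := ⟨by linarith [ht.1], by linarith [ht.2]⟩
    rw [hσ (a + s) h1 (a + t) h2]
    congr 1; ring

/-- Reversed restriction of a unit-speed parameterized segment is a geodesic. -/
lemma rev_geodesic {σ : ℝ → X} {T a b : ℝ}
    (hσ : ∀ s ∈ Set.Icc (0:ℝ) T, ∀ t ∈ Set.Icc (0:ℝ) T, dist (σ s) (σ t) = |s - t|)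
    (ha : 0 ≤ a) (hab : a ≤ b) (hb : b ≤ T) :
    dist (σ b) (σ a) = b - a ∧ IsGeodesicFrom (fun u => σ (b - u)) (σ b) (σ a) := by
  have haT : a ∈ Set.Icc (0:ℝ) T := ⟨ha, hab.trans hb⟩
  have hbT : b ∈ Set.Icc (0:ℝ) T := ⟨ha.trans hab, hb⟩
  have hd : dist (σ b) (σ a) = b - a := by
    rw [hσ b hbT a haT, abs_of_nonneg (by linarith)]
  refine ⟨hd, by simp, ?_, ?_⟩
  · rw [hd]
    show σ (b - (b - a)) = σ a
    norm_num
  · intro s hs t ht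
    rw [hd] at hs ht
    have h1 : b - s ∈ Set.Icc (0:ℝ) T := ⟨by linarith [hs.2], by linarith [hs.1]⟩
    have h2 : b - t ∈ Set.Icc (0:ℝ) T := ⟨by linarith [ht.2], by linarith [ht.1]⟩
    rw [hσ (b - s) h1 (b - t) h2, show b - s - (b - t) = -(s - t) by ring, abs_neg]

/-- The reversal of a geodesic is a geodesic. -/
lemma rev_of_geodesic {ρ : ℝ → X} {A B : X} (h : IsGeodesicFrom ρ A B) :
    IsGeodesicFrom (fun u => ρ (dist A B - u)) B A := by
  obtain ⟨h0, hd, hiso⟩ := h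
  refine ⟨by simpa using hd, ?_, ?_⟩
  · rw [dist_comm B A]
    show ρ (dist A B - dist A B) = A
    simpa using h0
  · intro s hs t ht
    rw [dist_comm B A] at hs ht
    have h1 : dist A B - s ∈ Set.Icc (0:ℝ) (dist A B) := ⟨by linarith [hs.2], by linarith [hs.1]⟩
    have h2 : dist A B - t ∈ Set.Icc (0:ℝ) (dist A B) := ⟨by linarith [ht.2], by linarith [ht.1]⟩
    rw [hiso _ h1 _ h2, show dist A B - s - (dist A B - t) = -(s - t) by ring, abs_neg]

/-- Key geometric lemma: two geodesics descending to nearest points of the quasi-convex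
set `Δ`, which are at distance at most `M` at time `s`, are within `4L + 8δ` of each
other at all later times `t ≥ s + M/2` (provided there is enough room below). -/
lemma lemmaA {δ L : ℝ} (hδ : 0 < δ) (hL : 0 < L)
    (hgeo : GeodesicSpace X) (hthin : ThinTriangles X δ)
    {Δ : Set X} (hΔqc : QuasiConvex Δ L)
    (σ τ : ℝ → X) (T s M : ℝ)
    (hσ : ∀ u ∈ Set.Icc (0:ℝ) T, ∀ v ∈ Set.Icc (0:ℝ) T, dist (σ u) (σ v) = |u - v|)
    (hτ : ∀ u ∈ Set.Icc (0:ℝ) T, ∀ v ∈ Set.Icc (0:ℝ) T, dist (τ u) (τ v) = |u - v|)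
    (hσT : σ T ∈ Δ) (hτT : τ T ∈ Δ)
    (hσd : ∀ u ∈ Set.Icc (0:ℝ) T, infDist (σ u) Δ = T - u)
    (hτd : ∀ u ∈ Set.Icc (0:ℝ) T, infDist (τ u) Δ = T - u)
    (hs : 0 ≤ s) (hM : 0 ≤ M) (hMd : dist (σ s) (τ s) ≤ M)
    (hbig : s + M + 10*(L + δ) ≤ T) :
    ∀ t ∈ Set.Icc (s + M/2) T, dist (σ t) (τ t) ≤ 4*L + 8*δ := by
  have hsT : s ≤ T := by linarith
  have e1 : dist (σ s) (σ T) = T - s := (sub_geodesic hσ hs hsT le_rfl).1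
  have e2 : dist (τ s) (τ T) = T - s := (sub_geodesic hτ hs hsT le_rfl).1
  have hMab0 : (0:ℝ) ≤ dist (σ s) (τ s) := dist_nonneg
  have hD0 : (0:ℝ) ≤ dist (σ T) (τ T) := dist_nonneg
  -- triangle inequalities
  have t1 : dist (σ s) (τ T) ≤ dist (σ s) (τ s) + (T - s) := by
    calc dist (σ s) (τ T) ≤ dist (σ s) (τ s) + dist (τ s) (τ T) := dist_triangle _ _ _
    _ = dist (σ s) (τ s) + (T - s) := by rw [e2]
  have t2 : dist (σ s) (τ T) ≤ (T - s) + dist (σ T) (τ T) := by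
    calc dist (σ s) (τ T) ≤ dist (σ s) (σ T) + dist (σ T) (τ T) := dist_triangle _ _ _
    _ = (T - s) + dist (σ T) (τ T) := by rw [e1]
  have t3 : T - s ≤ dist (σ s) (τ T) + dist (σ T) (τ T) := by
    calc T - s = dist (σ s) (σ T) := e1.symm
    _ ≤ dist (σ s) (τ T) + dist (τ T) (σ T) := dist_triangle _ _ _
    _ = dist (σ s) (τ T) + dist (σ T) (τ T) := by rw [dist_comm (τ T) (σ T)]
  have t4 : T - s ≤ dist (σ s) (τ T) := by
    have h' := hσd s ⟨hs, hsT⟩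
    rw [← h']
    exact infDist_le_dist_of_mem hτT
  have t5 : dist (σ T) (τ T) ≤ (T - s) + dist (σ s) (τ T) := by
    calc dist (σ T) (τ T) ≤ dist (σ T) (σ s) + dist (σ s) (τ T) := dist_triangle _ _ _
    _ = (T - s) + dist (σ s) (τ T) := by rw [dist_comm (σ T) (σ s), e1]
  -- the geodesic ρ from σ s to τ T
  obtain ⟨ρ, hρ⟩ := hgeo (σ s) (τ T)
  have hρ0 := hρ.1
  have hρd := hρ.2.1
  have hρiso := hρ.2.2
  -- the geodesic ζ from σ T to τ T
  obtain ⟨ζ, hζ⟩ := hgeo (σ T) (τ T)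
  -- reversed σ from σ T to σ s
  have hσrev := (rev_geodesic hσ hs hsT le_rfl).2
  -- Step P : the Gromov product (σ s | τ T) at σ T is at most L + δ
  have hgpP : gromovProd (σ T) (σ s) (τ T) =
      ((T - s) + dist (σ T) (τ T) - dist (σ s) (τ T)) / 2 := by
    simp only [gromovProd]
    rw [e1, dist_comm (τ T) (σ T)]
  have hπ0 : 0 ≤ ((T - s) + dist (σ T) (τ T) - dist (σ s) (τ T)) / 2 := by linarith
  have hπh : ((T - s) + dist (σ T) (τ T) - dist (σ s) (τ T)) / 2 ≤ T - s := by linarith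
  have hπD : ((T - s) + dist (σ T) (τ T) - dist (σ s) (τ T)) / 2 ≤ dist (σ T) (τ T) := by
    linarith
  have hthinP : dist (σ (T - ((T - s) + dist (σ T) (τ T) - dist (σ s) (τ T)) / 2))
      (ζ (((T - s) + dist (σ T) (τ T) - dist (σ s) (τ T)) / 2)) ≤ δ := by
    have := hthin (σ s) (σ T) (τ T) (fun u => σ (T - u)) ζ hσrev hζ
      (((T - s) + dist (σ T) (τ T) - dist (σ s) (τ T)) / 2) (by rw [hgpP]; exact ⟨hπ0, le_rfl⟩)
    simpa using this
  have hquasi : infDist (ζ (((T - s) + dist (σ T) (τ T) - dist (σ s) (τ T)) / 2)) Δ ≤ L :=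
    hΔqc (σ T) hσT (τ T) hτT ζ hζ _ ⟨hπ0, hπD⟩
  have hσdπ : infDist (σ (T - ((T - s) + dist (σ T) (τ T) - dist (σ s) (τ T)) / 2)) Δ =
      ((T - s) + dist (σ T) (τ T) - dist (σ s) (τ T)) / 2 := by
    rw [hσd _ ⟨by linarith, by linarith⟩]; ring
  have stepP : dist (σ T) (τ T) ≤ dist (σ s) (τ T) - (T - s) + 2*L + 2*δ := by
    have h1 : infDist (σ (T - ((T - s) + dist (σ T) (τ T) - dist (σ s) (τ T)) / 2)) Δ ≤
        infDist (ζ (((T - s) + dist (σ T) (τ T) - dist (σ s) (τ T)) / 2)) Δ +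
        dist (σ (T - ((T - s) + dist (σ T) (τ T) - dist (σ s) (τ T)) / 2))
          (ζ (((T - s) + dist (σ T) (τ T) - dist (σ s) (τ T)) / 2)) :=
      infDist_le_infDist_add_dist
    rw [hσdπ] at h1
    linarith
  -- Thin triangle T1 : base σ s, sides to σ T (along σ) and to τ T (along ρ)
  have hσfwd := (sub_geodesic hσ hs hsT le_rfl).2
  have hgp1 : gromovProd (σ s) (σ T) (τ T) =
      ((T - s) + dist (σ s) (τ T) - dist (σ T) (τ T)) / 2 := by
    simp only [gromovProd]
    rw [dist_comm (σ T) (σ s), e1, dist_comm (τ T) (σ s)]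
  have hπ₁0 : 0 ≤ ((T - s) + dist (σ s) (τ T) - dist (σ T) (τ T)) / 2 := by linarith
  have hπ₁h : ((T - s) + dist (σ s) (τ T) - dist (σ T) (τ T)) / 2 ≤ T - s := by linarith
  have hπ₁d : ((T - s) + dist (σ s) (τ T) - dist (σ T) (τ T)) / 2 ≤ dist (σ s) (τ T) := by
    linarith
  have thinT1 : ∀ u : ℝ, 0 ≤ u → u ≤ ((T - s) + dist (σ s) (τ T) - dist (σ T) (τ T)) / 2 →
      dist (σ (s + u)) (ρ u) ≤ δ := by
    intro u hu0 hu1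
    have := hthin (σ T) (σ s) (τ T) (fun w => σ (s + w)) ρ hσfwd hρ u
      (by rw [hgp1]; exact ⟨hu0, hu1⟩)
    simpa using this
  -- Thin triangle T2 : base τ T, sides to σ s (along ρ reversed) and to τ s (along τ reversed)
  have hρrev := rev_of_geodesic hρ
  have hτrev := (rev_geodesic hτ hs hsT le_rfl).2
  have hgp2 : gromovProd (τ T) (σ s) (τ s) =
      (dist (σ s) (τ T) + (T - s) - dist (σ s) (τ s)) / 2 := by
    simp only [gromovProd]
    rw [e2]
  have thinT2 : ∀ v : ℝ, 0 ≤ v →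
      v ≤ (dist (σ s) (τ T) + (T - s) - dist (σ s) (τ s)) / 2 →
      dist (ρ (dist (σ s) (τ T) - v)) (τ (T - v)) ≤ δ := by
    intro v hv0 hv1
    have := hthin (σ s) (τ T) (τ s) (fun w => ρ (dist (σ s) (τ T) - w)) (fun w => τ (T - w))
      hρrev hτrev v (by rw [hgp2]; exact ⟨hv0, hv1⟩)
    simpa using this
  -- Step 2 : d - (T - s) ≤ 2δ
  have step2 : dist (σ s) (τ T) - (T - s) ≤ 2*δ := by
    -- evaluate at v₀ = d - π₁
    have hv₀0 : 0 ≤ (dist (σ s) (τ T) - (T - s) + dist (σ T) (τ T)) / 2 := by linarith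
    have hv₀small : (dist (σ s) (τ T) - (T - s) + dist (σ T) (τ T)) / 2 ≤ M + L + δ := by
      linarith
    have hv₀π₂ : (dist (σ s) (τ T) - (T - s) + dist (σ T) (τ T)) / 2 ≤
        (dist (σ s) (τ T) + (T - s) - dist (σ s) (τ s)) / 2 := by linarith
    have h2 := thinT2 ((dist (σ s) (τ T) - (T - s) + dist (σ T) (τ T)) / 2) hv₀0 hv₀π₂
    have h1 := thinT1 (((T - s) + dist (σ s) (τ T) - dist (σ T) (τ T)) / 2) hπ₁0 le_rfl
    have harg : dist (σ s) (τ T) - (dist (σ s) (τ T) - (T - s) + dist (σ T) (τ T)) / 2 =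
        ((T - s) + dist (σ s) (τ T) - dist (σ T) (τ T)) / 2 := by ring
    rw [harg] at h2
    have hτdv : infDist (τ (T - (dist (σ s) (τ T) - (T - s) + dist (σ T) (τ T)) / 2)) Δ =
        (dist (σ s) (τ T) - (T - s) + dist (σ T) (τ T)) / 2 := by
      rw [hτd _ ⟨by linarith, by linarith⟩]; ring
    have hσdu : infDist (σ (s + ((T - s) + dist (σ s) (τ T) - dist (σ T) (τ T)) / 2)) Δ =
        ((T - s) - dist (σ s) (τ T) + dist (σ T) (τ T)) / 2 := by
      rw [hσd _ ⟨by linarith, by linarith⟩]; ring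
    have chain : infDist (τ (T - (dist (σ s) (τ T) - (T - s) + dist (σ T) (τ T)) / 2)) Δ ≤
        infDist (σ (s + ((T - s) + dist (σ s) (τ T) - dist (σ T) (τ T)) / 2)) Δ +
        dist (τ (T - (dist (σ s) (τ T) - (T - s) + dist (σ T) (τ T)) / 2))
          (σ (s + ((T - s) + dist (σ s) (τ T) - dist (σ T) (τ T)) / 2)) :=
      infDist_le_infDist_add_dist
    rw [dist_comm] at h1 h2
    have tri := dist_triangle (τ (T - (dist (σ s) (τ T) - (T - s) + dist (σ T) (τ T)) / 2))
        (ρ (((T - s) + dist (σ s) (τ T) - dist (σ T) (τ T)) / 2))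
        (σ (s + ((T - s) + dist (σ s) (τ T) - dist (σ T) (τ T)) / 2))
    rw [hτdv, hσdu] at chain
    linarith
  have stepD : dist (σ T) (τ T) ≤ 2*L + 4*δ := by linarith
  -- Step 3 : the conclusion
  intro t ht
  have ht0 : 0 ≤ t := by linarith [ht.1]
  have htT : t ≤ T := ht.2
  have hv0 : 0 ≤ T - t := by linarith
  have hvM : T - t ≤ (T - s) - M/2 := by linarith [ht.1]
  have eσt : dist (σ t) (σ T) = T - t := (sub_geodesic hσ ht0 htT le_rfl).1
  have eτt : dist (τ t) (τ T) = T - t := (sub_geodesic hτ ht0 htT le_rfl).1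
  by_cases hcase : T - t ≤ ((T - s) - dist (σ s) (τ T) + dist (σ T) (τ T)) / 2
  · -- close to the bottom
    have hvsmall : T - t ≤ L + 2*δ := by linarith
    calc dist (σ t) (τ t) ≤ dist (σ t) (σ T) + dist (σ T) (τ t) := dist_triangle _ _ _
    _ ≤ dist (σ t) (σ T) + (dist (σ T) (τ T) + dist (τ T) (τ t)) := by
        gcongr; exact dist_triangle _ _ _
    _ = (T - t) + (dist (σ T) (τ T) + (T - t)) := by rw [eσt, dist_comm (τ T) (τ t), eτt]
    _ ≤ 4*L + 8*δ := by linarith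
  · push_neg at hcase
    -- middle region : both σ t and τ t are δ-close to ρ
    have h1 : dist (σ (s + ((T - s) - (T - t)))) (ρ ((T - s) - (T - t))) ≤ δ :=
      thinT1 _ (by linarith) (by linarith)
    have h2 : dist (ρ (dist (σ s) (τ T) - (T - t))) (τ (T - (T - t))) ≤ δ :=
      thinT2 _ hv0 (by linarith)
    have harg1 : s + ((T - s) - (T - t)) = t := by ring
    have harg2 : T - (T - t) = t := by ring
    rw [harg1] at h1
    rw [harg2] at h2
    have hρρ : dist (ρ ((T - s) - (T - t))) (ρ (dist (σ s) (τ T) - (T - t))) ≤ 2*δ := by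
      have hin1 : (T - s) - (T - t) ∈ Set.Icc (0:ℝ) (dist (σ s) (τ T)) :=
        ⟨by linarith, by linarith⟩
      have hin2 : dist (σ s) (τ T) - (T - t) ∈ Set.Icc (0:ℝ) (dist (σ s) (τ T)) :=
        ⟨by linarith, by linarith⟩
      rw [hρiso _ hin1 _ hin2, abs_of_nonpos (by linarith)]
      linarith
    calc dist (σ t) (τ t) ≤ dist (σ t) (ρ ((T - s) - (T - t))) +
        dist (ρ ((T - s) - (T - t))) (τ t) := dist_triangle _ _ _
    _ ≤ dist (σ t) (ρ ((T - s) - (T - t))) +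
        (dist (ρ ((T - s) - (T - t))) (ρ (dist (σ s) (τ T) - (T - t))) +
         dist (ρ (dist (σ s) (τ T) - (T - t))) (τ t)) := by
        gcongr; exact dist_triangle _ _ _
    _ ≤ δ + (2*δ + δ) := by gcongr
    _ ≤ 4*L + 8*δ := by linarith

end Aux

/-- Proposition (`only identity`): in a δ-hyperbolic geodesic space, for a group `G` acting
by isometries preserving an `L`-quasi-convex set `Δ`, with all non-identity elements of
infinite order, an acylindrical action, and nearest-point projections onto the closed
`r`-neighbourhoods of `Δ`, for every `E > 0` there is `L₀ > 0` such that any `g ∈ G`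
translating all points of a subsegment of length ≥ `L₀` of a geodesic `γ` ending at its
nearest point of `Δ` by at most `E` must be the identity. -/
theorem stmt_3 (δ L : ℝ) (hδ : 0 < δ) (hL : 0 < L)
    (X : Type*) [MetricSpace X]
    (hgeo : GeodesicSpace X) (hthin : ThinTriangles X δ)
    (G : Type*) [Group G] [MulAction G X]
    (hisom : ∀ (g : G) (p q : X), dist (g • p) (g • q) = dist p q)
    (Δ : Set X) (hΔne : Δ.Nonempty) (hΔqc : QuasiConvex Δ L)
    (hΔinv : ∀ g : G, (fun p => g • p) '' Δ = Δ)
    (htorsionfree : ∀ g : G, g ≠ 1 → ¬ IsOfFinOrder g)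
    (hacyl : ∀ D : ℝ, 0 < D → ∃ R : ℝ, 0 < R ∧ ∃ N : ℕ, ∀ x y : X, dist x y ≥ R →
      {g : G | dist x (g • x) ≤ D ∧ dist y (g • y) ≤ D}.Finite ∧
        {g : G | dist x (g • x) ≤ D ∧ dist y (g • y) ≤ D}.ncard ≤ N)
    (hproj : ∀ r : ℝ, L ≤ r → ∀ p : X,
      ∃ q ∈ {u : X | infDist u Δ ≤ r}, dist p q = infDist p {u : X | infDist u Δ ≤ r}) :
    ∀ E : ℝ, 0 < E → ∃ L₀ : ℝ, 0 < L₀ ∧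
      ∀ (γ : ℝ → X) (T : ℝ), 0 ≤ T →
        (∀ s ∈ Set.Icc (0 : ℝ) T, ∀ t ∈ Set.Icc (0 : ℝ) T, dist (γ s) (γ t) = |s - t|) →
        γ T ∈ Δ →
        (∀ t ∈ Set.Icc (0 : ℝ) T, infDist (γ t) Δ = dist (γ t) (γ T)) →
        ∀ g : G, ∀ t₁ t₂ : ℝ, 0 ≤ t₁ → t₁ ≤ t₂ → t₂ ≤ T → t₂ - t₁ ≥ L₀ →
          (∀ t ∈ Set.Icc t₁ t₂, dist (γ t) (g • γ t) ≤ E) → g = 1 := by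
  classical
  intro E hE
  have hC0 : (0:ℝ) < 4*L + 8*δ := by linarith
  obtain ⟨R, hR, N, hacylRN⟩ := hacyl (4*L + 8*δ) hC0
  have hNC : (0:ℝ) ≤ ((N:ℝ) + 2) * (4*L + 8*δ) := by positivity
  refine ⟨E + ((N:ℝ) + 2) * (4*L + 8*δ) + 10*(L + δ) + R, by positivity, ?_⟩
  intro γ T hT hγ hγT hnear g t₁ t₂ ht₁ h12 h2T hlen hdisp
  by_contra hg
  have hinj : Function.Injective (fun n : ℕ => g ^ n) :=
    injective_pow_iff_not_isOfFinOrder.mpr (htorsionfree g hg)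
  have hbigT : t₁ + (E + ((N:ℝ) + 2) * (4*L + 8*δ) + 10*(L + δ) + R) ≤ T := by linarith
  have hγd : ∀ u ∈ Set.Icc (0:ℝ) T, infDist (γ u) Δ = T - u := by
    intro u hu
    rw [hnear u hu, (sub_geodesic hγ hu.1 hu.2 le_rfl).1]
  have hsmul_infDist : ∀ (a : G) (p : X), infDist (a • p) Δ = infDist p Δ := by
    intro a p
    have hiso : Isometry (fun q : X => a • q) := Isometry.of_dist_eq (hisom a)
    calc infDist (a • p) Δ
        = infDist ((fun q : X => a • q) p) ((fun q : X => a • q) '' Δ) := by rw [hΔinv a]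
    _ = infDist p Δ := infDist_image hiso
  have hτpack : ∀ a : G,
      (∀ u ∈ Set.Icc (0:ℝ) T, ∀ v ∈ Set.Icc (0:ℝ) T, dist (a • γ u) (a • γ v) = |u - v|) ∧
      a • γ T ∈ Δ ∧ ∀ u ∈ Set.Icc (0:ℝ) T, infDist (a • γ u) Δ = T - u := by
    intro a
    refine ⟨fun u hu v hv => by rw [hisom a, hγ u hu v hv], ?_, fun u hu => by
      rw [hsmul_infDist, hγd u hu]⟩
    rw [← hΔinv a]
    exact Set.mem_image_of_mem _ hγT
  -- base of the induction
  have base : ∀ t ∈ Set.Icc (t₁ + E/2) T, dist (γ t) (g • γ t) ≤ 4*L + 8*δ := by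
    have pack := hτpack g
    exact lemmaA hδ hL hgeo hthin hΔqc γ (fun t => g • γ t) T t₁ E hγ pack.1 hγT pack.2.1
      hγd pack.2.2 ht₁ hE.le (hdisp t₁ ⟨le_rfl, h12⟩) (by linarith)
  -- induction on powers of g
  have key : ∀ k : ℕ, k ≤ N →
      ∀ t ∈ Set.Icc (t₁ + E/2 + (k:ℝ) * (4*L + 8*δ)) T,
        dist (γ t) ((g ^ (k+1)) • γ t) ≤ 4*L + 8*δ := by
    intro k
    induction k with
    | zero =>
      intro _ t ht
      have ht' : t ∈ Set.Icc (t₁ + E/2) T := by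
        refine ⟨?_, ht.2⟩
        have := ht.1
        push_cast at this
        linarith
      simpa [pow_one] using base t ht'
    | succ k ih =>
      intro hk1 t ht
      have hkN : k ≤ N := Nat.le_of_succ_le hk1
      have hkR : (k:ℝ) ≤ (N:ℝ) := Nat.cast_le.mpr hkN
      have hs₀T : t₁ + E/2 + (k:ℝ) * (4*L + 8*δ) + 2*(4*L + 8*δ) + 10*(L + δ) ≤ T := by
        nlinarith [hbigT, hC0]
      -- distance bound at s₀
      have hd1 : dist (γ (t₁ + E/2 + (k:ℝ) * (4*L + 8*δ)))
          (g • γ (t₁ + E/2 + (k:ℝ) * (4*L + 8*δ))) ≤ 4*L + 8*δ := by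
        refine base _ ⟨by nlinarith [hC0], by linarith⟩
      have hd2 : dist (γ (t₁ + E/2 + (k:ℝ) * (4*L + 8*δ)))
          ((g ^ (k+1)) • γ (t₁ + E/2 + (k:ℝ) * (4*L + 8*δ))) ≤ 4*L + 8*δ := by
        refine ih hkN _ ⟨le_rfl, by linarith⟩
      have hMd : dist (γ (t₁ + E/2 + (k:ℝ) * (4*L + 8*δ)))
          ((g ^ (k+2)) • γ (t₁ + E/2 + (k:ℝ) * (4*L + 8*δ))) ≤ 2*(4*L + 8*δ) := by
        have hsplit : (g ^ (k+2)) • γ (t₁ + E/2 + (k:ℝ) * (4*L + 8*δ)) =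
            g • ((g ^ (k+1)) • γ (t₁ + E/2 + (k:ℝ) * (4*L + 8*δ))) := by
          rw [← mul_smul, ← pow_succ']
        have tri := dist_triangle (γ (t₁ + E/2 + (k:ℝ) * (4*L + 8*δ)))
            (g • γ (t₁ + E/2 + (k:ℝ) * (4*L + 8*δ)))
            ((g ^ (k+2)) • γ (t₁ + E/2 + (k:ℝ) * (4*L + 8*δ)))
        have hh : dist (g • γ (t₁ + E/2 + (k:ℝ) * (4*L + 8*δ)))
            ((g ^ (k+2)) • γ (t₁ + E/2 + (k:ℝ) * (4*L + 8*δ))) ≤ 4*L + 8*δ := by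
          rw [hsplit, hisom g]
          exact hd2
        linarith
      have pack := hτpack (g ^ (k+2))
      have happ := lemmaA hδ hL hgeo hthin hΔqc γ (fun t => (g ^ (k+2)) • γ t) T
        (t₁ + E/2 + (k:ℝ) * (4*L + 8*δ)) (2*(4*L + 8*δ)) hγ pack.1 hγT pack.2.1 hγd pack.2.2
        (by nlinarith [hC0]) (by linarith) hMd (by linarith)
      have ht' : t ∈ Set.Icc (t₁ + E/2 + (k:ℝ) * (4*L + 8*δ) + (2*(4*L + 8*δ))/2) T := by
        refine ⟨?_, ht.2⟩
        have := ht.1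
        push_cast at this
        linarith
      simpa using happ t ht'
  -- the two test points
  have hTR0 : 0 ≤ T - R := by linarith
  have hTRT : T - R ≤ T := by linarith
  have hdistxy : dist (γ (T - R)) (γ T) ≥ R := by
    rw [(sub_geodesic hγ hTR0 hTRT le_rfl).1]
    linarith
  obtain ⟨hfin, hcard⟩ := hacylRN (γ (T - R)) (γ T) hdistxy
  have hmem : ∀ k : ℕ, k ≤ N + 1 →
      g ^ k ∈ {h : G | dist (γ (T - R)) (h • γ (T - R)) ≤ 4*L + 8*δ ∧
        dist (γ T) (h • γ T) ≤ 4*L + 8*δ} := by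
    intro k hk
    match k, hk with
    | 0, _ => exact ⟨by simp [hC0.le], by simp [hC0.le]⟩
    | (k+1), hk =>
      have hkN : k ≤ N := by omega
      have hkR : (k:ℝ) ≤ (N:ℝ) := Nat.cast_le.mpr hkN
      constructor
      · exact key k hkN (T - R) ⟨by nlinarith [hC0, hE], by linarith⟩
      · exact key k hkN T ⟨by nlinarith [hC0, hE], le_rfl⟩
  have hsub : (Finset.image (fun n : Fin (N+2) => g ^ (n:ℕ)) Finset.univ) ⊆ hfin.toFinset := by
    intro a ha
    simp only [Finset.mem_image] at ha
    obtain ⟨n, _, rfl⟩ := ha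
    exact hfin.mem_toFinset.mpr (hmem (n:ℕ) (Nat.lt_succ_iff.mp n.isLt))
  have hinj2 : Function.Injective (fun n : Fin (N+2) => g ^ (n:ℕ)) := by
    intro a b hab
    exact Fin.val_injective (hinj hab)
  have hcardimg : (Finset.image (fun n : Fin (N+2) => g ^ (n:ℕ)) Finset.univ).card = N + 2 := by
    rw [Finset.card_image_of_injective _ hinj2, Finset.card_univ, Fintype.card_fin]
  have hle : N + 2 ≤ hfin.toFinset.card := by
    rw [← hcardimg]
    exact Finset.card_le_card hsub
  rw [Set.ncard_eq_toFinset_card _ hfin] at hcard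
  omega
end

section
/- For all δ > 0, L > 0 and all functions R : ℝ → ℝ and N : ℝ → ℕ, there exists K₀ > 0 with the following property. Let X be a geodesic metric space with δ-thin triangles, let G₁ and G₂ be subgroups of the group of isometric bijections of X onto itself, and let Δ₁, Δ₂ ⊆ X be nonempty subsets such that for each i ∈ {1, 2}: (a) Δᵢ is L-quasi-convex; (b) g(Δᵢ) = Δᵢ for every g ∈ Gᵢ; (c) every non-identity element of Gᵢ has infinite order; (d) for every D > 0 and all x, y ∈ X with dist(x, y) ≥ R(D), the set {g ∈ Gᵢ : dist(x, g(x)) ≤ D and dist(y, g(y)) ≤ D} is finite with at most N(D) elements; (e) for every r ≥ L and every p ∈ X there exists q ∈ N_r(Δᵢ) = {u ∈ X : infDist(u, Δᵢ) ≤ r} with dist(p, q) = infDist(p, N_r(Δᵢ)). Assume moreover that there exist x₀ ∈ Δ₁ and z₀ ∈ Δ₂ with dist(x₀, z₀) ≤ dist(a, b) for all a ∈ Δ₁ and b ∈ Δ₂. If dist(x₀, z₀) > K₀, then the canonical homomorphism from the free product G₁ * G₂ to the isometry group of X induced by the two inclusions is injective; in particular, the subgroup generated by G₁ and G₂ is isomorphic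 to the free product G₁ * G₂. -/
open Metric Set

/-!
Ping-pong on `U₁ = {p | (z₀|p)_{x₀} ≤ B + δ}` and `U₂ = {p | (x₀|p)_{z₀} ≤ B + δ}`.
The key estimate is `(z₀|g z₀)_{x₀} ≤ B = B(δ, L, R, N)` for every `g ∈ G₁ \ {1}`. Otherwise
`[x₀, z₀]` and `g [x₀, z₀]` start from nearby feet on `Δ₁` and fellow-travel for a long time,
so `g` moves a point far out on `[x₀, z₀]` by at most `θ = 7δ + 4L`; then `g, g², …` still
have long Gromov products, and `g⁰, …, g^{N θ}` all move both `x₀` and a point at distance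
`R θ` from it by at most `θ`, contradicting acylindricity since `g` has infinite order.
Given the estimate, thinness of triangles yields `g U₂ ⊆ U₁` as soon as
`dist x₀ z₀ > 2B + 3δ + L`, and symmetrically `G₂ \ {1}` maps `U₁` into `U₂`.
-/

open scoped Pointwise

instance IsometryEquiv.applyMulAction {Y : Type*} [PseudoEMetricSpace Y] :
    MulAction (Y ≃ᵢ Y) Y where
  smul g p := g p
  one_smul _ := rfl
  mul_smul _ _ _ := rfl

instance Monoid.Coprod.subsingleton {M N : Type*} [Monoid M] [Monoid N] [Subsingleton M]
    [Subsingleton N] : Subsingleton (Monoid.Coprod M N) := by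
  suffices h : ∀ w : Monoid.Coprod M N, w = 1 from ⟨fun a b => (h a).trans (h b).symm⟩
  intro w
  induction w using Monoid.Coprod.induction_on with
  | inl m => rw [Subsingleton.elim m 1, map_one]
  | inr n => rw [Subsingleton.elim n 1, map_one]
  | mul a b ha hb => rw [ha, hb, one_mul]

open Cardinal in
theorem Subgroup.three_le_mk_of_ne_bot {Γ : Type*} [Group Γ] {G : Subgroup Γ} (hG : G ≠ ⊥)
    (hTor : ∀ g ∈ G, g ≠ 1 → ¬IsOfFinOrder g) : 3 ≤ #G := by
  obtain ⟨a, ha⟩ := ne_bot_iff_exists_ne_one.1 hG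
  have hinf : ¬IsOfFinOrder a := fun h =>
    hTor a a.2 (by simpa using ha) (Submonoid.isOfFinOrder_coe.2 h)
  have : Infinite G := .of_injective _ (injective_pow_iff_not_isOfFinOrder.2 hinf)
  exact ofNat_le_aleph0.trans (infinite_iff.1 this)

universe u in
open Cardinal in
theorem Monoid.Coprod.lift_injective_of_ping_pong {G α : Type*} {H₁ H₂ : Type u} [Group G]
    [Group H₁] [Group H₂] [MulAction G α] (f₁ : H₁ →* G) (f₂ : H₂ →* G)
    (hcard : 3 ≤ #H₁ ∨ 3 ≤ #H₂) (X₁ X₂ : Set α) (hX₁ : X₁.Nonempty) (hX₂ : X₂.Nonempty)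
    (hdisj : Disjoint X₁ X₂) (hpp₁ : ∀ h : H₁, h ≠ 1 → f₁ h • X₂ ⊆ X₁)
    (hpp₂ : ∀ h : H₂, h ≠ 1 → f₂ h • X₁ ⊆ X₂) :
    Function.Injective (Monoid.Coprod.lift f₁ f₂) := by
  let H : Bool → Type u := fun b => cond b H₁ H₂
  let _ : ∀ b, Group (H b) := fun b => match b with | true => ‹_› | false => ‹_›
  let f : ∀ b, H b →* G := fun b => match b with | true => f₁ | false => f₂
  let X : Bool → Set α := fun b => cond b X₁ X₂
  have hinj : Function.Injective (CoprodI.lift f) := by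
    refine CoprodI.lift_injective_of_ping_pong f ?_ X (Bool.forall_bool.2 ⟨hX₂, hX₁⟩) ?_ ?_
    · rcases hcard with h | h
      exacts [Or.inr ⟨true, h⟩, Or.inr ⟨false, h⟩]
    · rintro (_ | _) (_ | _) hij
      exacts [absurd rfl hij, hdisj.symm, hdisj, absurd rfl hij]
    · rintro (_ | _) (_ | _) hij
      exacts [absurd rfl hij, hpp₂, hpp₁, absurd rfl hij]
  let e : Coprod H₁ H₂ →* CoprodI H :=
    Coprod.lift (CoprodI.of (M := H) (i := true)) (CoprodI.of (M := H) (i := false))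
  let e' : CoprodI H →* Coprod H₁ H₂ :=
    CoprodI.lift fun b => match b with | true => Coprod.inl | false => Coprod.inr
  have hlift : (CoprodI.lift f).comp e = Coprod.lift f₁ f₂ :=
    Coprod.hom_ext (MonoidHom.ext fun _ => CoprodI.lift_of _ _)
      (MonoidHom.ext fun _ => CoprodI.lift_of _ _)
  have he : Function.LeftInverse e' e := fun w => by
    change (e'.comp e) w = MonoidHom.id _ w
    congr 1
    exact Coprod.hom_ext (MonoidHom.ext fun _ => CoprodI.lift_of _ _)
      (MonoidHom.ext fun _ => CoprodI.lift_of _ _)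
  rw [← hlift, MonoidHom.coe_comp]
  exact hinj.comp he.injective

theorem IsometryEquiv.dist_pow_apply_le {X : Type*} [PseudoMetricSpace X] (g : X ≃ᵢ X) (p : X)
    (k : ℕ) : dist p ((g ^ k) p) ≤ k * dist p (g p) := by
  induction k with
  | zero => simp
  | succ k ih =>
    calc dist p ((g ^ (k + 1)) p) ≤ dist p (g p) + dist (g p) ((g ^ (k + 1)) p) :=
          dist_triangle _ _ _
      _ = dist p (g p) + dist p ((g ^ k) p) := by
          rw [pow_succ', IsometryEquiv.mul_apply, g.dist_eq]
      _ ≤ (k + 1 : ℕ) * dist p (g p) := by push_cast; linarith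

namespace IsGeodesicFrom

variable {X : Type*} [MetricSpace X] {σ : ℝ → X} {a b : X} {s : ℝ}

theorem dist_left (h : IsGeodesicFrom σ a b) (hs : s ∈ Icc 0 (dist a b)) :
    dist a (σ s) = s := by
  rw [← h.1, h.2.2 0 ⟨le_rfl, dist_nonneg⟩ s hs, zero_sub, abs_neg, abs_of_nonneg hs.1]

theorem dist_right (h : IsGeodesicFrom σ a b) (hs : s ∈ Icc 0 (dist a b)) :
    dist b (σ s) = dist a b - s := by
  have h' := h.2.2 _ ⟨dist_nonneg, le_rfl⟩ s hs
  rwa [h.2.1, abs_of_nonneg (sub_nonneg.2 hs.2)] at h'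

theorem symm (h : IsGeodesicFrom σ a b) : IsGeodesicFrom (fun v => σ (dist a b - v)) b a := by
  obtain ⟨h0, h1, hiso⟩ := h
  rw [IsGeodesicFrom, dist_comm b a]
  refine ⟨by simpa using h1, by simpa using h0, fun s hs t ht => ?_⟩
  rw [hiso _ ⟨by linarith [hs.2], by linarith [hs.1]⟩ _ ⟨by linarith [ht.2], by linarith [ht.1]⟩,
    abs_sub_comm]
  ring_nf

theorem map (h : IsGeodesicFrom σ a b) (g : X ≃ᵢ X) :
    IsGeodesicFrom (fun v => g (σ v)) (g a) (g b) := by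
  obtain ⟨h0, h1, hiso⟩ := h
  simp only [IsGeodesicFrom, g.dist_eq]
  exact ⟨by rw [h0], by rw [h1], hiso⟩

end IsGeodesicFrom

section GromovProduct

variable {X : Type*} [MetricSpace X]

theorem gromovProd_nonneg (Q P R : X) : 0 ≤ gromovProd Q P R := by
  unfold gromovProd
  linarith [dist_triangle P Q R, dist_comm Q R]

theorem gromovProd_comm (Q P R : X) : gromovProd Q P R = gromovProd Q R P := by
  unfold gromovProd
  rw [dist_comm P R, add_comm (dist P Q)]

theorem gromovProd_le_dist_left (Q P R : X) : gromovProd Q P R ≤ dist Q P := by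
  unfold gromovProd
  linarith [dist_triangle R P Q, dist_comm R P, dist_comm Q P]

theorem gromovProd_le_dist_right (Q P R : X) : gromovProd Q P R ≤ dist Q R :=
  gromovProd_comm Q P R ▸ gromovProd_le_dist_left Q R P

theorem gromovProd_add_gromovProd (Q P R : X) :
    gromovProd Q P R + gromovProd P Q R = dist Q P := by
  unfold gromovProd
  rw [dist_comm P Q, dist_comm R Q, dist_comm R P]
  ring

theorem gromovProd_self_right (Q P : X) : gromovProd Q P Q = 0 := by
  simp [gromovProd]

theorem gromovProd_map (g : X ≃ᵢ X) (Q P R : X) :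
    gromovProd (g Q) (g P) (g R) = gromovProd Q P R := by
  simp only [gromovProd, g.dist_eq]

variable {δ : ℝ}

theorem ThinTriangles.min_sub_le_gromovProd (hGeo : GeodesicSpace X) (hThin : ThinTriangles X δ)
    (w a b c : X) : min (gromovProd w a b) (gromovProd w b c) - δ ≤ gromovProd w a c := by
  obtain ⟨σa, hσa⟩ := hGeo w a
  obtain ⟨σb, hσb⟩ := hGeo w b
  obtain ⟨σc, hσc⟩ := hGeo w c
  set m := min (gromovProd w a b) (gromovProd w b c)
  have hm0 : 0 ≤ m := le_min (gromovProd_nonneg _ _ _) (gromovProd_nonneg _ _ _)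
  have hab : dist (σa m) (σb m) ≤ δ := hThin a w b σa σb hσa hσb m ⟨hm0, min_le_left _ _⟩
  have hbc : dist (σb m) (σc m) ≤ δ := hThin b w c σb σc hσb hσc m ⟨hm0, min_le_right _ _⟩
  have ha : dist a (σa m) = dist w a - m :=
    hσa.dist_right ⟨hm0, (min_le_left _ _).trans (gromovProd_le_dist_left w a b)⟩
  have hc : dist c (σc m) = dist w c - m :=
    hσc.dist_right ⟨hm0, (min_le_right _ _).trans (gromovProd_le_dist_right w b c)⟩
  unfold gromovProd
  linarith [dist_triangle4 a (σa m) (σb m) (σc m), dist_triangle a (σc m) c, dist_comm c (σc m),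
    dist_comm a w, dist_comm c w]

theorem IsGeodesicFrom.sub_half_le_gromovProd {σ : ℝ → X} {x z : X}
    (hσ : IsGeodesicFrom σ x z) {s : ℝ} (hs : s ∈ Icc 0 (dist x z)) (u : X ≃ᵢ X)
    (hu : dist x z ≤ dist x (u z)) : s - dist (σ s) (u (σ s)) / 2 ≤ gromovProd x z (u z) := by
  have hz := hσ.dist_right hs
  unfold gromovProd
  linarith [dist_triangle4 z (σ s) (u (σ s)) (u z), u.dist_eq (σ s) z, dist_comm z x,
    dist_comm (u z) x, dist_comm z (σ s)]

end GromovProduct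

section NearestPoint

variable {X : Type*} [MetricSpace X]

def IsNearestPoint (Δ : Set X) (z x : X) : Prop :=
  x ∈ Δ ∧ ∀ a ∈ Δ, dist z x ≤ dist z a

variable {δ L : ℝ} {Δ : Set X} {x z x' z' : X} {σ σ' : ℝ → X}

theorem IsNearestPoint.dist_le_infDist (hn : IsNearestPoint Δ z x) : dist z x ≤ infDist z Δ :=
  (le_infDist ⟨x, hn.1⟩).2 hn.2

theorem IsNearestPoint.map (hn : IsNearestPoint Δ z x) {g : X ≃ᵢ X} (hg : g '' Δ = Δ) :
    IsNearestPoint Δ (g z) (g x) := by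
  refine ⟨hg ▸ mem_image_of_mem g hn.1, ?_⟩
  rw [← hg]
  rintro _ ⟨a, ha, rfl⟩
  simpa only [g.dist_eq] using hn.2 a ha

theorem IsNearestPoint.gromovProd_le (hGeo : GeodesicSpace X) (hThin : ThinTriangles X δ)
    (hQC : QuasiConvex Δ L) (hn : IsNearestPoint Δ z x) {a : X} (ha : a ∈ Δ) :
    gromovProd x z a ≤ δ + L := by
  obtain ⟨σ, hσ⟩ := hGeo x z
  obtain ⟨τ, hτ⟩ := hGeo x a
  set m := gromovProd x z a
  have hm0 : 0 ≤ m := gromovProd_nonneg x z a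
  have hthin : dist (σ m) (τ m) ≤ δ := hThin z x a σ τ hσ hτ m ⟨hm0, le_rfl⟩
  have hqc : infDist (τ m) Δ ≤ L :=
    hQC x hn.1 a ha τ hτ m ⟨hm0, gromovProd_le_dist_right x z a⟩
  have hz : dist z (σ m) = dist x z - m := hσ.dist_right ⟨hm0, gromovProd_le_dist_left x z a⟩
  -- `z` is at distance `dist x z` from `Δ`, but `σ m`, `τ m` put it within `dist x z - m + δ + L`
  linarith [hn.dist_le_infDist, infDist_le_infDist_add_dist (x := z) (y := τ m) (s := Δ),
    dist_triangle z (σ m) (τ m), dist_comm z x]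

theorem IsNearestPoint.sub_le_infDist (hGeo : GeodesicSpace X) (hThin : ThinTriangles X δ)
    (hQC : QuasiConvex Δ L) (hn : IsNearestPoint Δ z x) (hσ : IsGeodesicFrom σ x z) {s : ℝ}
    (hs : s ∈ Icc 0 (dist x z)) : s - 2 * (δ + L) ≤ infDist (σ s) Δ := by
  refine (le_infDist ⟨x, hn.1⟩).2 fun a ha => ?_
  have h := hn.gromovProd_le hGeo hThin hQC ha
  unfold gromovProd at h
  linarith [hσ.dist_right hs, dist_triangle z (σ s) a, dist_comm z x, dist_comm a x,
    dist_nonneg (x := x) (y := a)]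

theorem IsNearestPoint.dist_le_of_lt_gromovProd (hGeo : GeodesicSpace X)
    (hThin : ThinTriangles X δ) (hδ : 0 ≤ δ) (hL : 0 ≤ L) (hQC : QuasiConvex Δ L)
    (hn : IsNearestPoint Δ z x) (hn' : IsNearestPoint Δ z' x')
    (hρ : 4 * δ + 3 * L < gromovProd x z z') : dist x x' ≤ 5 * δ + 4 * L := by
  by_contra! ht
  obtain ⟨σ, hσ⟩ := hGeo x z
  obtain ⟨γ, hγ⟩ := hGeo x z'
  obtain ⟨η, hη⟩ := hGeo x x'
  have hfoot : dist x x' - (δ + L) ≤ gromovProd x z' x' := by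
    have h := hn'.gromovProd_le hGeo hThin hQC hn.1
    unfold gromovProd at h ⊢
    linarith [dist_comm x x', dist_comm z' x, dist_comm x' z']
  set u := min (gromovProd x z z') (dist x x' - (δ + L))
  have hu0 : 0 ≤ u := le_min (gromovProd_nonneg _ _ _) (by linarith)
  have hu : 4 * δ + 3 * L < u := lt_min hρ (by linarith)
  have h1 : dist (σ u) (γ u) ≤ δ := hThin z x z' σ γ hσ hγ u ⟨hu0, min_le_left _ _⟩
  have h2 : dist (γ u) (η u) ≤ δ :=
    hThin z' x x' γ η hγ hη u ⟨hu0, (min_le_right _ _).trans hfoot⟩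
  have h3 : infDist (η u) Δ ≤ L :=
    hQC x hn.1 x' hn'.1 η hη u ⟨hu0, (min_le_right _ _).trans (by linarith)⟩
  have h4 : u - 2 * (δ + L) ≤ infDist (σ u) Δ :=
    hn.sub_le_infDist hGeo hThin hQC hσ
      ⟨hu0, (min_le_left _ _).trans (gromovProd_le_dist_left x z z')⟩
  linarith [infDist_le_infDist_add_dist (x := σ u) (y := η u) (s := Δ),
    dist_triangle (σ u) (γ u) (η u)]

theorem IsNearestPoint.dist_geodesics_le (hGeo : GeodesicSpace X) (hThin : ThinTriangles X δ)
    (hQC : QuasiConvex Δ L) (hx : x ∈ Δ) (hn' : IsNearestPoint Δ z' x')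
    (hσ : IsGeodesicFrom σ x z) (hσ' : IsGeodesicFrom σ' x' z') {T s : ℝ}
    (hT : 2 * (δ + L) ≤ T) (ht : dist x x' ≤ T) (hs : s ∈ Icc T (gromovProd x z z' - T)) :
    dist (σ s) (σ' s) ≤ T + 2 * δ := by
  obtain ⟨γ, hγ⟩ := hGeo x z'
  set r := dist x z' - dist x' z'
  have hfoot := hn'.gromovProd_le hGeo hThin hQC hx
  unfold gromovProd at hfoot
  have hx' : 0 ≤ dist x x' := dist_nonneg
  have hr : |r| ≤ T := abs_le.2
    ⟨by linarith [dist_comm z' x, dist_comm z' x'], by linarith [dist_triangle x x' z']⟩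
  have hρz := gromovProd_le_dist_left x z z'
  have hρz' := gromovProd_le_dist_right x z z'
  -- `σ` and `γ` fellow-travel from `x`, while `γ` and `σ'` fellow-travel back from `z'`
  have h1 : dist (σ (s + r)) (γ (s + r)) ≤ δ := hThin z x z' σ γ hσ hγ _
    ⟨by linarith [neg_abs_le r, hs.1], by linarith [le_abs_self r, hs.2]⟩
  have h2 := hThin x z' x' _ _ hγ.symm hσ'.symm (dist x' z' - s)
    ⟨by linarith [hs.2, dist_triangle x x' z'], by
      unfold gromovProd; linarith [hs.1, dist_comm z' x, dist_comm z' x', dist_comm x' z']⟩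
  simp only [sub_sub_cancel] at h2
  rw [show dist x z' - (dist x' z' - s) = s + r by ring] at h2
  have h3 : dist (σ s) (σ (s + r)) = |r| := by
    rw [hσ.2.2 s ⟨by linarith [hs.1], by linarith [hs.2]⟩ (s + r)
      ⟨by linarith [neg_abs_le r, hs.1], by linarith [le_abs_self r, hs.2]⟩]
    rw [sub_add_cancel_left, abs_neg]
  linarith [dist_triangle4 (σ s) (σ (s + r)) (γ (s + r)) (σ' s)]

end NearestPoint

section Acylindrical

variable {X : Type*} [MetricSpace X]

def IsAcylindrical (G : Subgroup (X ≃ᵢ X)) (R : ℝ → ℝ) (N : ℝ → ℕ) : Prop :=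
  ∀ D : ℝ, 0 < D → ∀ x y : X, dist x y ≥ R D →
    {g : X ≃ᵢ X | g ∈ G ∧ dist x (g x) ≤ D ∧ dist y (g y) ≤ D}.Finite ∧
    {g : X ≃ᵢ X | g ∈ G ∧ dist x (g x) ≤ D ∧ dist y (g y) ≤ D}.ncard ≤ N D

theorem IsAcylindrical.exists_pow_dist_gt {G : Subgroup (X ≃ᵢ X)} {R : ℝ → ℝ} {N : ℝ → ℕ}
    (hA : IsAcylindrical G R N) {g : X ≃ᵢ X} (hg : g ∈ G) (hg' : ¬IsOfFinOrder g) {D : ℝ}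
    (hD : 0 < D) {x y : X} (hxy : R D ≤ dist x y) :
    ∃ k ≤ N D, D < dist x ((g ^ k) x) ∨ D < dist y ((g ^ k) y) := by
  by_contra! h
  obtain ⟨hfin, hcard⟩ := hA D hD x y hxy
  have hsub : (fun k : ℕ => g ^ k) '' ↑(Finset.range (N D + 1)) ⊆
      {u : X ≃ᵢ X | u ∈ G ∧ dist x (u x) ≤ D ∧ dist y (u y) ≤ D} := by
    rintro _ ⟨k, hk, rfl⟩
    exact ⟨pow_mem hg k, h k (Nat.lt_succ_iff.1 (Finset.mem_range.1 hk))⟩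
  have hle := (Set.ncard_le_ncard hsub hfin).trans hcard
  rw [Set.ncard_image_of_injective _ (injective_pow_iff_not_isOfFinOrder.2 hg'),
    Set.ncard_coe_finset, Finset.card_range] at hle
  omega

end Acylindrical

noncomputable def gromovBound (δ L : ℝ) (R : ℝ → ℝ) (N : ℝ → ℕ) : ℝ :=
  max (R (7 * δ + 4 * L)) (5 * δ + 4 * L) + 2 * (5 * δ + 4 * L) +
    N (7 * δ + 4 * L) * (7 * δ + 4 * L) / 2

theorem gromovBound_nonneg {δ L : ℝ} (hδ : 0 ≤ δ) (hL : 0 ≤ L) (R : ℝ → ℝ) (N : ℝ → ℕ) :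
    0 ≤ gromovBound δ L R N := by
  have : 0 ≤ (N (7 * δ + 4 * L) : ℝ) * (7 * δ + 4 * L) / 2 := by positivity
  unfold gromovBound
  linarith [le_max_right (R (7 * δ + 4 * L)) (5 * δ + 4 * L)]

section Displacement

variable {X : Type*} [MetricSpace X] {δ L : ℝ} {Δ : Set X} {x z : X} {σ : ℝ → X}

theorem IsNearestPoint.dist_apply_le (hGeo : GeodesicSpace X) (hThin : ThinTriangles X δ)
    (hδ : 0 ≤ δ) (hL : 0 ≤ L) (hQC : QuasiConvex Δ L) (hn : IsNearestPoint Δ z x)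
    (hσ : IsGeodesicFrom σ x z) {u : X ≃ᵢ X} (hu : u '' Δ = Δ)
    (hρ : 4 * δ + 3 * L < gromovProd x z (u z)) :
    dist x (u x) ≤ 5 * δ + 4 * L ∧
      ∀ s ∈ Icc (5 * δ + 4 * L) (gromovProd x z (u z) - (5 * δ + 4 * L)),
        dist (σ s) (u (σ s)) ≤ 7 * δ + 4 * L := by
  have ht := hn.dist_le_of_lt_gromovProd hGeo hThin hδ hL hQC (hn.map hu) hρ
  refine ⟨ht, fun s hs => ?_⟩
  have := (hn.map hu).dist_geodesics_le hGeo hThin hQC hn.1 hσ (hσ.map u) (by linarith) ht hs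
  linarith

theorem IsNearestPoint.gromovProd_apply_le_gromovBound (hGeo : GeodesicSpace X)
    (hThin : ThinTriangles X δ) (hδ : 0 < δ) (hL : 0 ≤ L) (hQC : QuasiConvex Δ L)
    (hn : IsNearestPoint Δ z x) {G : Subgroup (X ≃ᵢ X)} (hG : ∀ g ∈ G, g '' Δ = Δ)
    {R : ℝ → ℝ} {N : ℝ → ℕ} (hA : IsAcylindrical G R N) {g : X ≃ᵢ X} (hg : g ∈ G)
    (hg' : ¬IsOfFinOrder g) : gromovProd x z (g z) ≤ gromovBound δ L R N := by
  by_contra! hρ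
  set T := 5 * δ + 4 * L with hT
  set θ := 7 * δ + 4 * L with hθ
  -- acylindricity is tested on `x` and `σ s₁`; the displacement of `g` is measured at `σ s₂`
  set s₁ := max (R θ) T with hs₁
  set s₂ := s₁ + T + N θ * θ / 2 with hs₂
  have hB : gromovBound δ L R N = s₂ + T := by unfold gromovBound; ring
  have hTs₁ : T ≤ s₁ := le_max_right _ _
  have hNθ : 0 ≤ N θ * θ / 2 := by positivity
  obtain ⟨σ, hσ⟩ := hGeo x z
  have hρd := gromovProd_le_dist_left x z (g z)
  have hpow : ∀ k : ℕ, (g ^ k) '' Δ = Δ := fun k => hG _ (pow_mem hg k)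
  have hgσ : dist (σ s₂) (g (σ s₂)) ≤ θ :=
    (hn.dist_apply_le hGeo hThin hδ.le hL hQC hσ (hG g hg) (by linarith)).2 s₂
      ⟨by linarith, by linarith⟩
  have hfar : ∀ k ≤ N θ, s₁ + T ≤ gromovProd x z ((g ^ k) z) := fun k hk => by
    have hmin := (hn.map (hpow k)).2 x hn.1
    rw [IsometryEquiv.dist_eq, dist_comm z, dist_comm _ x] at hmin
    have hmove : (k : ℝ) * dist (σ s₂) (g (σ s₂)) ≤ N θ * θ :=
      mul_le_mul (Nat.cast_le.2 hk) hgσ dist_nonneg (Nat.cast_nonneg _)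
    linarith [hσ.sub_half_le_gromovProd (s := s₂) ⟨by linarith, by linarith⟩ (g ^ k) hmin,
      g.dist_pow_apply_le (σ s₂) k]
  obtain ⟨k, hk, hmoves⟩ :=
    hA.exists_pow_dist_gt hg hg' (D := θ) (by linarith) (x := x) (y := σ s₁) (by
      rw [hσ.dist_left ⟨by linarith, by linarith⟩]; exact le_max_left _ _)
  have hsmall := hn.dist_apply_le hGeo hThin hδ.le hL hQC hσ (hpow k) (by linarith [hfar k hk])
  rcases hmoves with h | h
  · linarith [hsmall.1]
  · linarith [hsmall.2 s₁ ⟨hTs₁, by linarith [hfar k hk]⟩]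

end Displacement

section PingPong

variable {X : Type*} [MetricSpace X] {δ L : ℝ} {Δ : Set X} {x z : X}

theorem IsNearestPoint.gromovProd_apply_le (hGeo : GeodesicSpace X) (hThin : ThinTriangles X δ)
    (hL : 0 ≤ L) (hQC : QuasiConvex Δ L) (hn : IsNearestPoint Δ z x) {g : X ≃ᵢ X} {q : X}
    (hq : q ∈ Δ) (hgq : g q = x) {B : ℝ} (hgz : gromovProd x z (g z) ≤ B)
    (hd : 2 * B + 3 * δ + L < dist x z) {p : X} (hp : gromovProd z x p ≤ B + δ) :
    gromovProd x z (g p) ≤ B + δ := by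
  have hB := (gromovProd_nonneg x z (g z)).trans hgz
  have hq_far : dist x z - (δ + L) ≤ gromovProd z x q := by
    linarith [hn.gromovProd_le hGeo hThin hQC hq, gromovProd_add_gromovProd x z q]
  have hqp : gromovProd z q p ≤ B + 2 * δ := by
    by_contra! h
    linarith [hThin.min_sub_le_gromovProd hGeo z x q p,
      lt_min (by linarith : B + 2 * δ < gromovProd z x q) h]
  have hmap : gromovProd x (g z) (g p) = gromovProd q z p := by rw [← hgq, gromovProd_map]
  have hgp_far : dist x z - B - 2 * δ ≤ gromovProd x (g p) (g z) := by
    rw [gromovProd_comm, hmap]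
    linarith [gromovProd_add_gromovProd z q p, hn.2 q hq, dist_comm z x]
  by_contra! h
  linarith [hThin.min_sub_le_gromovProd hGeo x z (g p) (g z),
    lt_min h (by linarith : B + δ < gromovProd x (g p) (g z))]

theorem IsNearestPoint.smul_setOf_gromovProd_le_subset (hGeo : GeodesicSpace X)
    (hThin : ThinTriangles X δ) (hδ : 0 < δ) (hL : 0 ≤ L) (hQC : QuasiConvex Δ L)
    (hn : IsNearestPoint Δ z x) {G : Subgroup (X ≃ᵢ X)} (hG : ∀ g ∈ G, g '' Δ = Δ)
    (hTor : ∀ g ∈ G, g ≠ 1 → ¬IsOfFinOrder g) {R : ℝ → ℝ} {N : ℝ → ℕ}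
    (hA : IsAcylindrical G R N) (hd : 2 * gromovBound δ L R N + 3 * δ + L < dist x z)
    {g : X ≃ᵢ X} (hg : g ∈ G) (hg1 : g ≠ 1) :
    g • {p | gromovProd z x p ≤ gromovBound δ L R N + δ} ⊆
      {p | gromovProd x z p ≤ gromovBound δ L R N + δ} := by
  rintro _ ⟨p, hp, rfl⟩
  obtain ⟨q, hq, hgq⟩ : x ∈ g '' Δ := (hG g hg).symm ▸ hn.1
  exact hn.gromovProd_apply_le hGeo hThin hL hQC hq hgq
    (hn.gromovProd_apply_le_gromovBound hGeo hThin hδ hL hQC hG hA hg (hTor g hg hg1)) hd hp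

theorem disjoint_setOf_gromovProd_le {β : ℝ} (hd : 2 * β < dist x z) :
    Disjoint {p | gromovProd x z p ≤ β} {p | gromovProd z x p ≤ β} :=
  Set.disjoint_left.2 fun p hp hp' => by
    linarith [gromovProd_add_gromovProd x z p, show gromovProd x z p ≤ β from hp,
      show gromovProd z x p ≤ β from hp']

end PingPong

/-- Theorem (Bowditch–Ohshika–Sakuma, abstract form): there is `K₀`, depending only on `δ`,
`L` and the acylindricity data `R`, `N`, such that whenever two subgroups `G₁`, `G₂` of the
isometry group of a δ-hyperbolic geodesic space preserve `L`-quasi-convex sets `Δ₁`, `Δ₂`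
satisfying the listed conditions and the distance between `Δ₁` and `Δ₂` exceeds `K₀`, the
canonical homomorphism `G₁ * G₂ → Isom(X)` is injective. -/
theorem stmt_4 (δ L : ℝ) (hδ : 0 < δ) (hL : 0 < L) (R : ℝ → ℝ) (N : ℝ → ℕ) :
    ∃ K₀ : ℝ, 0 < K₀ ∧
      ∀ (X : Type) [MetricSpace X],
        GeodesicSpace X → ThinTriangles X δ →
        ∀ (G₁ G₂ : Subgroup (X ≃ᵢ X)) (Δ₁ Δ₂ : Set X),
          Δ₁.Nonempty → Δ₂.Nonempty →
          QuasiConvex Δ₁ L → QuasiConvex Δ₂ L →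
          (∀ g ∈ G₁, (g : X ≃ᵢ X) '' Δ₁ = Δ₁) →
          (∀ g ∈ G₂, (g : X ≃ᵢ X) '' Δ₂ = Δ₂) →
          (∀ g ∈ G₁, g ≠ 1 → ¬ IsOfFinOrder g) →
          (∀ g ∈ G₂, g ≠ 1 → ¬ IsOfFinOrder g) →
          (∀ D : ℝ, 0 < D → ∀ x y : X, dist x y ≥ R D →
            {g : X ≃ᵢ X | g ∈ G₁ ∧ dist x (g x) ≤ D ∧ dist y (g y) ≤ D}.Finite ∧
            {g : X ≃ᵢ X | g ∈ G₁ ∧ dist x (g x) ≤ D ∧ dist y (g y) ≤ D}.ncard ≤ N D) →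
          (∀ D : ℝ, 0 < D → ∀ x y : X, dist x y ≥ R D →
            {g : X ≃ᵢ X | g ∈ G₂ ∧ dist x (g x) ≤ D ∧ dist y (g y) ≤ D}.Finite ∧
            {g : X ≃ᵢ X | g ∈ G₂ ∧ dist x (g x) ≤ D ∧ dist y (g y) ≤ D}.ncard ≤ N D) →
          (∀ r : ℝ, L ≤ r → ∀ p : X,
            ∃ q ∈ {u : X | infDist u Δ₁ ≤ r}, dist p q = infDist p {u : X | infDist u Δ₁ ≤ r}) →
          (∀ r : ℝ, L ≤ r → ∀ p : X,
            ∃ q ∈ {u : X | infDist u Δ₂ ≤ r}, dist p q = infDist p {u : X | infDist u Δ₂ ≤ r}) →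
          ∀ x₀ ∈ Δ₁, ∀ z₀ ∈ Δ₂,
            (∀ a ∈ Δ₁, ∀ b ∈ Δ₂, dist x₀ z₀ ≤ dist a b) →
            dist x₀ z₀ > K₀ →
            Function.Injective (Monoid.Coprod.lift G₁.subtype G₂.subtype) := by
  set B := gromovBound δ L R N
  have hB : 0 ≤ B := gromovBound_nonneg hδ.le hL.le R N
  refine ⟨2 * B + 3 * δ + L, by linarith, ?_⟩
  intro X _ hGeo hThin G₁ G₂ Δ₁ Δ₂ _ _ hQC₁ hQC₂ hG₁ hG₂ hTor₁ hTor₂ hA₁ hA₂ _ _ x₀ hx₀ z₀ hz₀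
    hmin hd
  have hn₁ : IsNearestPoint Δ₁ z₀ x₀ := ⟨hx₀, fun a ha => by
    simpa only [dist_comm z₀] using hmin a ha z₀ hz₀⟩
  have hn₂ : IsNearestPoint Δ₂ x₀ z₀ := ⟨hz₀, fun b hb => hmin x₀ hx₀ b hb⟩
  rcases em (G₁ = ⊥ ∧ G₂ = ⊥) with ⟨rfl, rfl⟩ | hG
  · exact Function.injective_of_subsingleton _
  refine Monoid.Coprod.lift_injective_of_ping_pong _ _ ?_
    {p | gromovProd x₀ z₀ p ≤ B + δ} {p | gromovProd z₀ x₀ p ≤ B + δ}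
    ⟨x₀, (gromovProd_self_right x₀ z₀).le.trans (by linarith)⟩
    ⟨z₀, (gromovProd_self_right z₀ x₀).le.trans (by linarith)⟩
    (disjoint_setOf_gromovProd_le (by linarith)) (fun h hh => ?_) (fun h hh => ?_)
  · rw [not_and_or] at hG
    exact hG.imp (Subgroup.three_le_mk_of_ne_bot · hTor₁)
      (Subgroup.three_le_mk_of_ne_bot · hTor₂)
  · exact hn₁.smul_setOf_gromovProd_le_subset hGeo hThin hδ hL.le hQC₁ hG₁ hTor₁ hA₁ hd h.2
      (by simpa using hh)
  · exact hn₂.smul_setOf_gromovProd_le_subset hGeo hThin hδ hL.le hQC₂ hG₂ hTor₂ hA₂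
      (by rwa [dist_comm]) h.2 (by simpa using hh)
end

section
/- For all δ > 0, L > 0, and L₀ > 0 there exists L'' > 0 with the following property. Let X be a geodesic metric space with δ-thin triangles, let Δ₁, Δ₂ ⊆ X be nonempty subsets with Δ₁ L-quasi-convex, and let g be an isometric bijection of X onto itself with g(Δ₁) = Δ₁. Let x ∈ Δ₁ and z ∈ Δ₂, and let γ be a geodesic from z to x with dist(z, x) ≤ dist(a, b) for all a ∈ Δ₂ and b ∈ Δ₁ (so γ is a shortest geodesic connecting Δ₂ and Δ₁). Assume that for all 0 ≤ t₁ ≤ t₂ ≤ dist(z, x) with t₂ − t₁ ≥ L₀ there exists t ∈ [t₁, t₂] with dist(γ(t), g(γ(t))) ≥ 2L + 5δ. Then the Gromov product satisfies (z | g(z))_{g(x)} ≤ L''. -/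
open Metric Set

lemma geo_rev {X : Type*} [MetricSpace X] {σ : ℝ → X} {a b : X}
    (h : IsGeodesicFrom σ a b) : IsGeodesicFrom (fun t => σ (dist a b - t)) b a := by
  obtain ⟨h0, hd, hiso⟩ := h
  refine ⟨by simpa using hd, by rw [dist_comm b a]; simpa using h0, ?_⟩
  intro s hs t ht
  rw [dist_comm b a] at hs ht
  rw [hiso _ ⟨by linarith [hs.2], by linarith [hs.1]⟩ _ ⟨by linarith [ht.2], by linarith [ht.1]⟩,
    show dist a b - s - (dist a b - t) = -(s - t) by ring, abs_neg]

lemma geo_map {X : Type*} [MetricSpace X] (g : X ≃ᵢ X) {σ : ℝ → X} {a b : X}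
    (h : IsGeodesicFrom σ a b) : IsGeodesicFrom (fun t => g (σ t)) (g a) (g b) := by
  obtain ⟨h0, hd, hiso⟩ := h
  have hdist : dist (g a) (g b) = dist a b := g.dist_eq a b
  exact ⟨by simp [h0], by simp [hdist, hd], fun s hs t ht => by
    rw [hdist] at hs ht; simpa [g.dist_eq] using hiso s hs t ht⟩

/-- Lemma (`geodesic in Delta'`, abstract form): there is `L''`, depending only on `δ`, `L`,
`L₀`, bounding the Gromov product `(z | g z)_{g x}` whenever `γ` is a shortest geodesic from
`z ∈ Δ₂` to `x ∈ Δ₁`, `g` is an isometry preserving the `L`-quasi-convex set `Δ₁`, and every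
subsegment of `γ` of length at least `L₀` contains a point moved by `g` at least `2L + 5δ`. -/
theorem stmt_5 (δ L L₀ : ℝ) (hδ : 0 < δ) (hL : 0 < L) (hL₀ : 0 < L₀) :
    ∃ L'' : ℝ, 0 < L'' ∧
      ∀ (X : Type) [MetricSpace X],
        GeodesicSpace X → ThinTriangles X δ →
        ∀ (Δ₁ Δ₂ : Set X), Δ₁.Nonempty → Δ₂.Nonempty →
          QuasiConvex Δ₁ L →
          ∀ g : X ≃ᵢ X, (g : X → X) '' Δ₁ = Δ₁ →
          ∀ x ∈ Δ₁, ∀ z ∈ Δ₂,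
          ∀ γ : ℝ → X, IsGeodesicFrom γ z x →
            (∀ a ∈ Δ₂, ∀ b ∈ Δ₁, dist z x ≤ dist a b) →
            (∀ t₁ t₂ : ℝ, 0 ≤ t₁ → t₁ ≤ t₂ → t₂ ≤ dist z x → t₂ - t₁ ≥ L₀ →
              ∃ t ∈ Set.Icc t₁ t₂, dist (γ t) (g (γ t)) ≥ 2 * L + 5 * δ) →
            gromovProd (g x) z (g z) ≤ L'' := by
  refine ⟨L₀ + 2*L + 4*δ, by linarith, ?_⟩
  intro X _ hGeo hThin Δ₁ Δ₂ hΔ₁ hΔ₂ hQC g himg x hx z hz γ hγ hmin hdisp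
  by_contra hKbig
  push_neg at hKbig
  set d := dist z x with hd_def
  set D := dist z (g x) with hD_def
  set c := dist x (g x) with hc_def
  set K := gromovProd (g x) z (g z) with hK_def
  have F1 : dist x z = d := by rw [dist_comm, ← hd_def]
  have F2 : dist (g x) x = c := by rw [dist_comm, ← hc_def]
  have F3 : dist (g x) z = D := by rw [dist_comm, ← hD_def]
  have F4 : dist (g z) (g x) = d := by rw [g.dist_eq, ← hd_def]
  have hgx : (g : X → X) x ∈ Δ₁ := by rw [← himg]; exact ⟨x, hx, rfl⟩
  have hd0 : (0:ℝ) ≤ d := dist_nonneg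
  have hc0 : (0:ℝ) ≤ c := dist_nonneg
  have hDd : d ≤ D := by have := hmin z hz _ hgx; rwa [← hD_def] at this
  have htri1 : D ≤ d + c := by
    have := dist_triangle z x (g x); rwa [← hd_def, ← hc_def, ← hD_def] at this
  have htri2 : c ≤ d + D := by
    have := dist_triangle x z (g x); rwa [F1, ← hc_def, ← hD_def] at this
  have htri3 : D ≤ dist z (g z) + d := by
    have := dist_triangle z (g z) (g x); rwa [F4, ← hD_def] at this
  have hgpK : K = (D + d - dist z (g z))/2 := by
    rw [hK_def]; simp only [gromovProd, F1, F2, F3, F4, ← hd_def, ← hD_def, ← hc_def]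
  have hgpN : gromovProd (g x) z x = (D + c - d)/2 := by
    simp only [gromovProd, F1, F2, F3, F4, ← hd_def, ← hD_def, ← hc_def]
  have hgpM : gromovProd x z (g x) = (d + c - D)/2 := by
    simp only [gromovProd, F1, F2, F3, F4, ← hd_def, ← hD_def, ← hc_def]
  have hgpK' : gromovProd z x (g x) = (d + D - c)/2 := by
    simp only [gromovProd, F1, F2, F3, F4, ← hd_def, ← hD_def, ← hc_def]
  have hKd : K ≤ d := by rw [hgpK]; linarith [htri3]
  have hdbig : L₀ + 2*L + 4*δ < d := lt_of_lt_of_le hKbig hKd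
  obtain ⟨e, he⟩ := hGeo (g x) z
  obtain ⟨cg, hcg⟩ := hGeo x (g x)
  have hcgr := geo_rev hcg
  have hγr := geo_rev hγ
  have hf := geo_map g hγr
  have her := geo_rev he
  -- minimality lower bound along γ
  have hlow : ∀ t : ℝ, 0 ≤ t → t ≤ d → t ≤ infDist (γ (d - t)) Δ₁ := by
    intro t ht0 htd
    by_contra hcon
    push_neg at hcon
    obtain ⟨q, hqΔ, hdq⟩ := (infDist_lt_iff hΔ₁).mp hcon
    have h0d : (0:ℝ) ∈ Set.Icc (0:ℝ) (dist z x) := ⟨le_rfl, dist_nonneg⟩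
    have hmem : d - t ∈ Set.Icc (0:ℝ) (dist z x) := ⟨by linarith, by rw [← hd_def]; linarith⟩
    have h := hγ.2.2 0 h0d (d - t) hmem
    rw [hγ.1] at h
    have h1 : dist z (γ (d - t)) = d - t := by
      rw [h, show (0:ℝ) - (d - t) = -(d - t) by ring, abs_neg,
        abs_of_nonneg (by linarith : (0:ℝ) ≤ d - t)]
    have h2 := hmin z hz q hqΔ
    have h3 := dist_triangle z (γ (d - t)) q
    linarith
  have hginf : ∀ p : X, infDist ((g : X → X) p) Δ₁ = infDist p Δ₁ := by
    intro p
    conv_lhs => rw [← himg]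
    exact infDist_image g.isometry
  -- bound on M = (z|gx)_x
  have hM : (d + c - D)/2 ≤ L + δ := by
    set m := (d + c - D)/2 with hm_def
    have hm0 : 0 ≤ m := by rw [hm_def]; linarith
    have hmd : m ≤ d := by rw [hm_def]; linarith
    have hmc : m ≤ c := by rw [hm_def]; linarith
    have h1 := hThin z x (g x) (fun t => γ (dist z x - t)) cg hγr hcg m
      ⟨hm0, by rw [hgpM]⟩
    have h1' : dist (γ (dist z x - m)) (cg m) ≤ δ := h1
    rw [← hd_def] at h1'
    have h2 := hQC x hx _ hgx cg hcg m ⟨hm0, by rw [← hc_def]; exact hmc⟩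
    have h3 := infDist_le_infDist_add_dist (x := γ (d - m)) (y := cg m) (s := Δ₁)
    have h4 := hlow m hm0 hmd
    linarith
  -- bound on N = (z|x)_{gx}
  have hN : (D + c - d)/2 ≤ L + 2*δ := by
    by_contra hNc
    push_neg at hNc
    have hK0 : (0:ℝ) < K := by linarith
    set t0 := min ((D + c - d)/2) K with ht0_def
    have ht00 : 0 ≤ t0 := le_min (by linarith) (le_of_lt hK0)
    have ht0N : t0 ≤ (D + c - d)/2 := min_le_left _ _
    have ht0K : t0 ≤ K := min_le_right _ _
    have ht0d : t0 ≤ d := le_trans ht0K hKd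
    have ht0c : t0 ≤ c := by linarith
    have h1 := hThin z (g x) x e (fun t => cg (dist x (g x) - t)) he hcgr t0
      ⟨ht00, by rw [hgpN]; exact ht0N⟩
    have h1' : dist (e t0) (cg (dist x (g x) - t0)) ≤ δ := h1
    have h2 := hThin z (g x) (g z) e (fun t => g (γ (dist z x - t))) he hf t0
      ⟨ht00, by rw [← hK_def]; exact ht0K⟩
    have h2' : dist (e t0) ((g : X → X) (γ (dist z x - t0))) ≤ δ := h2
    rw [← hd_def] at h2'
    have h3 := hQC _ hgx x hx (fun t => cg (dist x (g x) - t)) hcgr t0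
      ⟨ht00, by rw [F2]; exact ht0c⟩
    have h3' : infDist (cg (dist x (g x) - t0)) Δ₁ ≤ L := h3
    have h4 := infDist_le_infDist_add_dist
      (x := (g : X → X) (γ (d - t0))) (y := cg (dist x (g x) - t0)) (s := Δ₁)
    have h5 := dist_triangle ((g : X → X) (γ (d - t0))) (e t0) (cg (dist x (g x) - t0))
    have h6 := dist_comm (e t0) ((g : X → X) (γ (d - t0)))
    have h7 : infDist (γ (d - t0)) Δ₁ ≤ L + 2*δ := by
      rw [← hginf (γ (d - t0))]; linarith
    have h8 := hlow t0 ht00 ht0d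
    have h9 : L + 2*δ < t0 := lt_min hNc (by linarith)
    linarith
  have hDdLE : D - d ≤ L + 2*δ := by linarith
  -- the contradiction interval
  set u₁ := max 0 (d - K) with hu1_def
  set u₂ := (3*d - D - c)/2 with hu2_def
  have hu10 : (0:ℝ) ≤ u₁ := le_max_left _ _
  have hu1K : d - K ≤ u₁ := le_max_right _ _
  have hu2d : u₂ ≤ d := by rw [hu2_def]; linarith
  have hlen : L₀ ≤ u₂ - u₁ := by
    have h1 : (0:ℝ) ≤ u₂ - L₀ := by rw [hu2_def]; linarith
    have h2 : d - K ≤ u₂ - L₀ := by rw [hu2_def]; linarith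
    have h3 := max_le h1 h2
    rw [← hu1_def] at h3
    linarith
  have hbound : ∀ u, u₁ ≤ u → u ≤ u₂ → dist (γ u) ((g : X → X) (γ u)) ≤ L + 4*δ := by
    intro u huL huR
    have hu0 : 0 ≤ u := le_trans hu10 huL
    have hud : u ≤ d := le_trans huR hu2d
    have hs0 : 0 ≤ u + (D - d) := by linarith
    have hsK' : u + (D - d) ≤ (d + D - c)/2 := by
      have := hu2_def; linarith [huR, this.le, this.ge]
    have hsd : u + (D - d) ≤ d := by linarith
    have h1 := hThin x z (g x) γ (fun s => e (dist (g x) z - s)) hγ her (u + (D - d))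
      ⟨hs0, by rw [hgpK']; exact hsK'⟩
    have h1' : dist (γ (u + (D - d))) (e (dist (g x) z - (u + (D - d)))) ≤ δ := h1
    have harg : dist (g x) z - (u + (D - d)) = d - u := by rw [F3]; ring
    rw [harg] at h1'
    have htK : d - u ≤ K := by linarith
    have ht0 : 0 ≤ d - u := by linarith
    have h2 := hThin z (g x) (g z) e (fun t => g (γ (dist z x - t))) he hf (d - u)
      ⟨ht0, by rw [← hK_def]; exact htK⟩
    have h2' : dist (e (d - u)) ((g : X → X) (γ (dist z x - (d - u)))) ≤ δ := h2
    have harg2 : dist z x - (d - u) = u := by rw [← hd_def]; ring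
    rw [harg2] at h2'
    have h3 : dist (γ u) (γ (u + (D - d))) = D - d := by
      rw [hγ.2.2 u ⟨hu0, by rw [← hd_def]; exact hud⟩ (u + (D - d))
          ⟨hs0, by rw [← hd_def]; exact hsd⟩,
        show u - (u + (D - d)) = -(D - d) by ring, abs_neg,
        abs_of_nonneg (by linarith : (0:ℝ) ≤ D - d)]
    have h4 := dist_triangle (γ u) (γ (u + (D - d))) ((g : X → X) (γ u))
    have h5 := dist_triangle (γ (u + (D - d))) (e (d - u)) ((g : X → X) (γ u))
    linarith
  obtain ⟨u, hu, hubig⟩ := hdisp u₁ u₂ hu10 (by linarith) hu2d (by linarith)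
  have := hbound u hu.1 hu.2
  linarith
end
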